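/- arXiv:1602.08426 — 7 statements merged into one kernel-verified Lean document; each statement's English description precedes it below -/
import Mathlib

section
/- Let (X,d) be a metric space which is the union of two subsets A and B. Let φ_A : A → ℝ^a and φ_B : B → ℝ^b be non-contracting embeddings with ‖φ_A‖_Lip ≤ D_A and ‖φ_B‖_Lip ≤ D_B. Then there exists a non-contracting embedding Ψ : X → ℝ^{a+b+1} with ‖Ψ‖_Lip ≤ 7·D_A·D_B + 2·(D_A + D_B) such that ‖Ψ(u) − Ψ(v)‖ ≥ ‖φ_A(u) − φ_A(v)‖ for all u,v ∈ A and ‖Ψ(u) − Ψ(v)‖ ≥ ‖φ_B(u) − φ_B(v)‖ for all u,v ∈ B. -/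
/-!
Extending `φ_A` and `φ_B` to the closures, we may assume `A` and `B` closed. Choose a maximal
subset `S ⊆ A` with `d(s, t) ≥ (2/11)(d(s, B) + d(t, B))`, and for each `s` a point `q s ∈ B`
almost nearest to `s`. Separation makes `φ_A s ↦ φ_B (q s)` Lipschitz on `φ_A(S)`, so by
Kirszbraun's theorem it extends to a Lipschitz `g : ℝ^a → ℝ^b`. Then `G = φ_B` on `B`, `g ∘ φ_A`
off `B`, is Lipschitz on `A`, and for `x ∈ A`, `y ∈ B` it contracts `d(x, y)` by at most a
multiple of `d(x, B)`. With `F` built symmetrically, `Ψ = (F, G, c (d(·, A) - d(·, B)) / √2)`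
works: for `x ∈ A`, `y ∈ B` the last coordinate moves by `c (d(x, B) + d(y, A)) / √2`, which
pays for both losses.
-/

open Set Filter Topology Metric

theorem exists_maximal_pairwise {α : Type*} {r : α → α → Prop} (hr : ∀ x y, r x y → r y x)
    {M A : Set α} (hMA : M ⊆ A) (hM : M.Pairwise r) :
    ∃ S, M ⊆ S ∧ S ⊆ A ∧ S.Pairwise r ∧ ∀ x ∈ A, x ∉ S → ∃ s ∈ S, x ≠ s ∧ ¬ r x s := by
  obtain ⟨S, hMS, hSmax⟩ := zorn_subset_nonempty {S | S ⊆ A ∧ S.Pairwise r}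
    (fun c hc hchain _ => ⟨⋃₀ c, ⟨sUnion_subset fun s hs => (hc hs).1,
      (pairwise_sUnion hchain.directedOn).2 fun s hs => (hc hs).2⟩,
      fun _ => subset_sUnion_of_mem⟩) M ⟨hMA, hM⟩
  refine ⟨S, hMS, hSmax.1.1, hSmax.1.2, fun x hx hxS => ?_⟩
  by_contra! hcompat
  refine hxS (hSmax.2 ⟨insert_subset hx hSmax.1.1, pairwise_insert.2 ⟨hSmax.1.2,
    fun s hs hxs => ⟨hcompat s hs hxs, hr _ _ (hcompat s hs hxs)⟩⟩⟩ (subset_insert x S)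
    (mem_insert x S))

theorem forall_pair_of_union_eq_univ {α : Type*} {A B : Set α} (hAB : A ∪ B = univ)
    {P : α → α → Prop} (hP : ∀ x y, P x y → P y x) (hA : ∀ x ∈ A, ∀ y ∈ A, P x y)
    (hB : ∀ x ∈ B, ∀ y ∈ B, P x y) (hAB' : ∀ x ∈ A, ∀ y ∈ B, P x y) (x y : α) : P x y := by
  have hmem : ∀ z, z ∈ A ∨ z ∈ B := fun z => by simp [← mem_union, hAB]
  rcases hmem x with hx | hx <;> rcases hmem y with hy | hy
  exacts [hA x hx y hy, hAB' x hx y hy, hP _ _ (hAB' y hy x hx), hB x hx y hy]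

section Kirszbraun

variable {E F : Type*} [NormedAddCommGroup E] [InnerProductSpace ℝ E]
  [NormedAddCommGroup F] [InnerProductSpace ℝ F]

theorem exists_sq_norm_le_inner_sub_of_notMem_convexHull {s : Set F} (hs : s.Finite)
    (hne : s.Nonempty) {z : F} (hz : z ∉ convexHull ℝ s) :
    ∃ w : F, w ≠ 0 ∧ ∀ y ∈ s, ‖w‖ ^ 2 ≤ inner ℝ (y - z) w := by
  have hK : IsCompact (convexHull ℝ s) := hs.isCompact_convexHull ℝ
  obtain ⟨v, hvK, hv⟩ := exists_norm_eq_iInf_of_complete_convex (hne.convexHull)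
    hK.isComplete (convex_convexHull ℝ s) z
  have hproj := (norm_eq_iInf_iff_real_inner_le_zero (convex_convexHull ℝ s) hvK).1 hv
  refine ⟨v - z, sub_ne_zero.2 fun h => hz (h ▸ hvK), fun y hy => ?_⟩
  have h1 := hproj y (subset_convexHull ℝ s hy)
  have h2 : y - z = (y - v) + (v - z) := by abel
  have h3 : z - v = -(v - z) := by abel
  rw [h2, inner_add_left, real_inner_self_eq_norm_sq, real_inner_comm]
  rw [h3, inner_neg_left] at h1
  linarith

theorem norm_sum_smul_sq {ι : Type*} [Fintype ι] (w : ι → ℝ) (v : ι → F) :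
    ‖∑ i, w i • v i‖ ^ 2 = ∑ i, ∑ j, w i * w j * inner ℝ (v i) (v j) := by
  rw [← real_inner_self_eq_norm_sq, sum_inner]
  refine Finset.sum_congr rfl fun i _ => ?_
  rw [inner_sum]
  refine Finset.sum_congr rfl fun j _ => ?_
  rw [real_inner_smul_left, real_inner_smul_right]
  ring

theorem nonpos_of_mem_convexHull_of_norm_sub_sq_eq {ι : Type*} {S : Set ι} (x : ι → E)
    (y : ι → F) {L μ : ℝ} {u : E} {z : F}
    (hxy : ∀ i ∈ S, ∀ j ∈ S, ‖y i - y j‖ ≤ L * ‖x i - x j‖)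
    (hz : ∀ i ∈ S, ‖z - y i‖ ^ 2 = μ + L ^ 2 * ‖u - x i‖ ^ 2)
    (hmem : z ∈ convexHull ℝ (y '' S)) : μ ≤ 0 := by
  obtain ⟨κ, _, w, v, hw0, hw1, hvS, hwv⟩ := mem_convexHull_iff_exists_fintype.1 hmem
  choose k hkS hk using hvS
  simp only [← hk] at hwv
  have hpair : ∀ i ∈ S, ∀ j ∈ S,
      μ + L ^ 2 * inner ℝ (u - x i) (u - x j) ≤ inner ℝ (z - y i) (z - y j) := by
    intro i hi j hj
    have hsq : ‖y i - y j‖ ^ 2 ≤ (L * ‖x i - x j‖) ^ 2 :=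
      pow_le_pow_left₀ (norm_nonneg _) (hxy i hi j hj) 2
    have e1 := norm_sub_sq_real (z - y i) (z - y j)
    have e2 := norm_sub_sq_real (u - x i) (u - x j)
    rw [sub_sub_sub_cancel_left, norm_sub_rev] at e1 e2
    nlinarith [hz i hi, hz j hj]
  have hzero : ∑ i, w i • (z - y (k i)) = 0 := by
    simp only [smul_sub, Finset.sum_sub_distrib, ← Finset.sum_smul, hw1, one_smul, hwv, sub_self]
  calc μ ≤ μ + L ^ 2 * ‖∑ i, w i • (u - x (k i))‖ ^ 2 := le_add_of_nonneg_right (by positivity)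
    _ = ∑ i, ∑ j, w i * w j * (μ + L ^ 2 * inner ℝ (u - x (k i)) (u - x (k j))) := by
        simp only [norm_sum_smul_sq, mul_add, Finset.sum_add_distrib, ← Finset.sum_mul,
          ← Finset.mul_sum, hw1, one_mul]
        simp only [Finset.mul_sum]
        ring_nf
    _ ≤ ∑ i, ∑ j, w i * w j * inner ℝ (z - y (k i)) (z - y (k j)) := by
        gcongr with i _ j _
        · exact mul_nonneg (hw0 i) (hw0 j)
        · exact hpair _ (hkS i) _ (hkS j)
    _ = 0 := by rw [← norm_sum_smul_sq, hzero, norm_zero, sq, mul_zero]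

theorem mem_convexHull_of_forall_sup'_le {ι : Type*} {T : Finset ι} (hT : T.Nonempty)
    (y : ι → F) (c : ι → ℝ) {z : F}
    (hz : ∀ z', T.sup' hT (fun i => ‖z - y i‖ ^ 2 - c i)
      ≤ T.sup' hT (fun i => ‖z' - y i‖ ^ 2 - c i)) :
    z ∈ convexHull ℝ
      (y '' {i ∈ T | ‖z - y i‖ ^ 2 - c i = T.sup' hT (fun i => ‖z - y i‖ ^ 2 - c i)}) := by
  set f : ι → F → ℝ := fun i z' => ‖z' - y i‖ ^ 2 - c i
  set μ := T.sup' hT (fun i => f i z)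
  by_contra hnot
  obtain ⟨i₀, hi₀, hi₀μ⟩ := T.exists_mem_eq_sup' hT (fun i => f i z)
  have hactive : (y '' {i ∈ T | f i z = μ}).Nonempty := ⟨y i₀, i₀, ⟨hi₀, hi₀μ.symm⟩, rfl⟩
  obtain ⟨w, hw, hwy⟩ :=
    exists_sq_norm_le_inner_sub_of_notMem_convexHull (Set.toFinite _) hactive hnot
  have hw0 : 0 < ‖w‖ ^ 2 := by positivity
  -- A small step along `w` lowers the active `f i` (as `w` points into their hull) and keeps
  -- the inactive ones below `μ` (by continuity), contradicting minimality.
  have hdecr : ∀ i ∈ T, ∀ᶠ τ in 𝓝[>] (0 : ℝ), f i (z + τ • w) < μ := by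
    intro i hi
    by_cases hact : f i z = μ
    · filter_upwards [Ioo_mem_nhdsGT two_pos] with τ ⟨hτ0, hτ2⟩
      have hexp : f i (z + τ • w) = f i z - 2 * τ * inner ℝ (y i - z) w + τ ^ 2 * ‖w‖ ^ 2 := by
        simp only [f]
        rw [show z + τ • w - y i = (z - y i) + τ • w by abel, norm_add_sq_real,
          real_inner_smul_right, norm_smul, Real.norm_eq_abs, mul_pow, sq_abs,
          ← neg_sub (y i) z, inner_neg_left]
        ring
      have := hwy (y i) ⟨i, ⟨Finset.mem_coe.2 hi, hact⟩, rfl⟩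
      rw [hexp, hact]
      nlinarith [mul_pos hτ0 hw0, mul_pos (mul_pos hτ0 hw0) (sub_pos.2 hτ2)]
    · have hlt : f i z < μ := lt_of_le_of_ne (Finset.le_sup' (fun i => f i z) hi) hact
      have hcont : Continuous fun τ : ℝ => f i (z + τ • w) := by fun_prop
      have := hcont.tendsto 0
      simp only [zero_smul, add_zero] at this
      exact (this.eventually (gt_mem_nhds hlt)).filter_mono nhdsWithin_le_nhds
  obtain ⟨τ, hτ⟩ := ((Finset.eventually_all T).2 hdecr).exists
  exact (hz (z + τ • w)).not_gt ((Finset.sup'_lt_iff hT).2 hτ)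

theorem exists_forall_norm_sub_le_of_finset [FiniteDimensional ℝ F] {L : ℝ} (hL : 0 ≤ L)
    (T : Finset (E × F)) (hT : ∀ p ∈ T, ∀ q ∈ T, ‖p.2 - q.2‖ ≤ L * ‖p.1 - q.1‖) (u : E) :
    ∃ z : F, ∀ p ∈ T, ‖z - p.2‖ ≤ L * ‖u - p.1‖ := by
  rcases T.eq_empty_or_nonempty with rfl | hne
  · simp
  set c : E × F → ℝ := fun p => L ^ 2 * ‖u - p.1‖ ^ 2
  set G : F → ℝ := fun z => T.sup' hne (fun p => ‖z - p.2‖ ^ 2 - c p)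
  obtain ⟨p₀, hp₀⟩ := id hne
  have hGcont : Continuous G := by
    refine continuous_iff_continuousAt.2 fun z => ?_
    exact ContinuousAt.finset_sup'_apply hne fun p _ => by fun_prop
  have hGcoer : Tendsto G (cocompact F) atTop := by
    refine tendsto_atTop_mono (fun z => Finset.le_sup' (fun p => ‖z - p.2‖ ^ 2 - c p) hp₀) ?_
    refine tendsto_atTop_add_const_right _ _ ((tendsto_pow_atTop two_ne_zero).comp ?_)
    simpa only [dist_eq_norm] using tendsto_dist_right_cocompact_atTop p₀.2
  obtain ⟨z, hz⟩ := hGcont.exists_forall_le hGcoer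
  have hμ : G z ≤ 0 := nonpos_of_mem_convexHull_of_norm_sub_sq_eq Prod.fst Prod.snd (u := u)
    (fun p hp q hq => hT p hp.1 q hq.1) (fun p hp => by simp only [G]; linarith [hp.2])
    (mem_convexHull_of_forall_sup'_le hne Prod.snd c hz)
  refine ⟨z, fun p hp => (pow_le_pow_iff_left₀ (norm_nonneg _) (by positivity) two_ne_zero).1 ?_⟩
  have := Finset.le_sup' (fun p => ‖z - p.2‖ ^ 2 - c p) hp
  simp only [c] at this
  linarith [mul_pow L ‖u - p.1‖ 2]

theorem exists_forall_norm_sub_le [FiniteDimensional ℝ F] {L : ℝ} (hL : 0 ≤ L)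
    (M : Set (E × F)) (hM : ∀ p ∈ M, ∀ q ∈ M, ‖p.2 - q.2‖ ≤ L * ‖p.1 - q.1‖) (u : E) :
    ∃ z : F, ∀ p ∈ M, ‖z - p.2‖ ≤ L * ‖u - p.1‖ := by
  classical
  rcases M.eq_empty_or_nonempty with rfl | ⟨p₀, hp₀⟩
  · simp
  let ball : M → Set F := fun p => closedBall p.1.2 (L * ‖u - p.1.1‖)
  obtain ⟨z, -, hz⟩ := (isCompact_closedBall p₀.2 (L * ‖u - p₀.1‖)).inter_iInter_nonempty ball
    (fun _ => isClosed_closedBall) fun t => by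
      have htM : ∀ p ∈ insert p₀ (t.image Subtype.val), p ∈ M := by
        simp only [Finset.mem_insert, Finset.mem_image]
        rintro p (rfl | ⟨q, -, rfl⟩)
        exacts [hp₀, q.2]
      obtain ⟨z, hz⟩ := exists_forall_norm_sub_le_of_finset hL (insert p₀ (t.image Subtype.val))
        (fun p hp q hq => hM p (htM p hp) q (htM q hq)) u
      refine ⟨z, ?_, mem_iInter₂.2 fun p hp => ?_⟩
      · simpa [dist_eq_norm] using hz p₀ (Finset.mem_insert_self _ _)
      · simpa [ball, dist_eq_norm] using hz p (by simp [hp])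
  exact ⟨z, fun p hp => by simpa [ball, dist_eq_norm] using mem_iInter.1 hz ⟨p, hp⟩⟩

theorem kirszbraun [FiniteDimensional ℝ F] {L : ℝ} (hL : 0 ≤ L) (M : Set (E × F))
    (hM : ∀ p ∈ M, ∀ q ∈ M, ‖p.2 - q.2‖ ≤ L * ‖p.1 - q.1‖) :
    ∃ g : E → F, (∀ p ∈ M, g p.1 = p.2) ∧ ∀ x y, ‖g x - g y‖ ≤ L * ‖x - y‖ := by
  let r : E × F → E × F → Prop := fun p q => ‖p.2 - q.2‖ ≤ L * ‖p.1 - q.1‖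
  have hr : ∀ p q, r p q → r q p := fun p q h => by simpa only [r, norm_sub_rev] using h
  obtain ⟨G, hMG, -, hG, hmax⟩ := exists_maximal_pairwise hr (subset_univ M)
    (fun p hp q hq _ => hM p hp q hq)
  have hGr : ∀ p ∈ G, ∀ q ∈ G, r p q := fun p hp q hq => by
    rcases eq_or_ne p q with rfl | hpq
    · simp [r]
    · exact hG hp hq hpq
  have htotal : ∀ x, ∃ y, (x, y) ∈ G := fun x => by
    by_contra! hx
    obtain ⟨z, hz⟩ := exists_forall_norm_sub_le hL G hGr x
    obtain ⟨p, hp, -, hnot⟩ := hmax (x, z) (mem_univ _) (hx z)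
    exact hnot (hz p hp)
  choose g hg using htotal
  refine ⟨g, fun p hp => ?_, fun x y => hGr _ (hg x) _ (hg y)⟩
  have := hGr _ (hg p.1) _ (hMG hp)
  simp only [r, sub_self, norm_zero, mul_zero, norm_le_zero_iff, sub_eq_zero] at this
  exact this

end Kirszbraun

def euclideanAppend {a b : ℕ} (p : EuclideanSpace ℝ (Fin a)) (q : EuclideanSpace ℝ (Fin b))
    (r : ℝ) : EuclideanSpace ℝ (Fin (a + b + 1)) :=
  WithLp.toLp 2 (Fin.append (Fin.append p.ofLp q.ofLp) ![r])

theorem dist_euclideanAppend_sq {a b : ℕ} (p p' : EuclideanSpace ℝ (Fin a))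
    (q q' : EuclideanSpace ℝ (Fin b)) (r r' : ℝ) :
    dist (euclideanAppend p q r) (euclideanAppend p' q' r') ^ 2
      = dist p p' ^ 2 + dist q q' ^ 2 + (r - r') ^ 2 := by
  simp only [EuclideanSpace.dist_eq, Real.dist_eq, sq_abs]
  rw [Real.sq_sqrt (by positivity), Real.sq_sqrt (by positivity), Real.sq_sqrt (by positivity)]
  simp [euclideanAppend, Fin.sum_univ_add]

theorem sq_le_add_sq_of_sub_le {d p g a b : ℝ} (hd : 0 ≤ d) (ha : 0 ≤ a) (hb : 0 ≤ b)
    (hp : d - a ≤ p) (hg : d - b ≤ g) :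
    d ^ 2 ≤ p ^ 2 + g ^ 2 + (a + b) ^ 2 / 2 := by
  rcases le_total d a with h1 | h1 <;> rcases le_total d b with h2 | h2
  · nlinarith
  · nlinarith [mul_self_le_mul_self (by linarith) hg, sq_nonneg (d - b)]
  · nlinarith [mul_self_le_mul_self (by linarith) hp, sq_nonneg (d - a)]
  · nlinarith [mul_self_le_mul_self (by linarith) hp, mul_self_le_mul_self (by linarith) hg,
      sq_nonneg (d - a - b), sq_nonneg (a - b)]

theorem same_side_const_le (u v : ℝ) (hu : 1 ≤ u) (hv : 1 ≤ v) :
    u ^ 2 + (1311 / 200 * (u * v)) ^ 2 + (1713 / 900 + 437 / 150 * (u * v)) ^ 2 / 2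
      ≤ (7 * u * v + 2 * (u + v)) ^ 2 := by
  have huv : 1 ≤ u * v := one_le_mul_of_one_le_of_one_le hu hv
  nlinarith [mul_le_mul_of_nonneg_left hv (by linarith : 0 ≤ u)]

theorem cross_const_le (u v : ℝ) (hu : 1 ≤ u) (hv : 1 ≤ v) :
    (437 / 150 * (u * v) + 871 / 300 * u) ^ 2 + (437 / 150 * (u * v) + 871 / 300 * v) ^ 2
      + 2 * (1713 / 900 + 437 / 150 * (u * v)) ^ 2 ≤ (7 * u * v + 2 * (u + v)) ^ 2 := by
  have huv : 1 ≤ u * v := one_le_mul_of_one_le_of_one_le hu hv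
  nlinarith [mul_le_mul_of_nonneg_left hv (by linarith : 0 ≤ u),
    mul_le_mul_of_nonneg_left hu (by linarith : 0 ≤ v), sq_nonneg (u - v)]

theorem sq_bounds_of_same_side {DA DB d p g s : ℝ} (hDA : 1 ≤ DA) (hDB : 1 ≤ DB) (hd : 0 ≤ d)
    (hp : d ≤ p ∧ p ≤ DA * d) (hg0 : 0 ≤ g) (hg : g ≤ 1311 / 200 * (DA * DB) * d)
    (hs : |s| ≤ d) :
    d ^ 2 ≤ p ^ 2 + g ^ 2 + (1713 / 900 + 437 / 150 * (DA * DB)) ^ 2 / 2 * s ^ 2 ∧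
      p ^ 2 + g ^ 2 + (1713 / 900 + 437 / 150 * (DA * DB)) ^ 2 / 2 * s ^ 2
        ≤ ((7 * DA * DB + 2 * (DA + DB)) * d) ^ 2 := by
  have hs2 : s ^ 2 ≤ d ^ 2 := by rw [← sq_abs]; exact pow_le_pow_left₀ (abs_nonneg s) hs 2
  have hp2 : p ^ 2 ≤ (DA * d) ^ 2 := pow_le_pow_left₀ (hd.trans hp.1) hp.2 2
  have hg2 : g ^ 2 ≤ (1311 / 200 * (DA * DB) * d) ^ 2 := pow_le_pow_left₀ hg0 hg 2
  constructor
  · nlinarith [pow_le_pow_left₀ hd hp.1 2, sq_nonneg g, sq_nonneg s]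
  · have := mul_le_mul_of_nonneg_right (same_side_const_le DA DB hDA hDB) (sq_nonneg d)
    nlinarith [mul_le_mul_of_nonneg_left hs2 (by positivity :
      (0:ℝ) ≤ (1713 / 900 + 437 / 150 * (DA * DB)) ^ 2 / 2)]

theorem sq_bounds_of_cross {DA DB d p g σ σ' : ℝ} (hDA : 1 ≤ DA) (hDB : 1 ≤ DB) (hd : 0 ≤ d)
    (hσ : 0 ≤ σ ∧ σ ≤ d) (hσ' : 0 ≤ σ' ∧ σ' ≤ d) (hp0 : 0 ≤ p) (hg0 : 0 ≤ g)
    (hp : d - (1713 / 900 + 437 / 150 * (DA * DB)) * σ ≤ p ∧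
      p ≤ (437 / 150 * (DA * DB) + 871 / 300 * DA) * d)
    (hg : d - (1713 / 900 + 437 / 150 * (DA * DB)) * σ' ≤ g ∧
      g ≤ (437 / 150 * (DA * DB) + 871 / 300 * DB) * d) :
    d ^ 2 ≤ p ^ 2 + g ^ 2 + (1713 / 900 + 437 / 150 * (DA * DB)) ^ 2 / 2 * (σ + σ') ^ 2 ∧
      p ^ 2 + g ^ 2 + (1713 / 900 + 437 / 150 * (DA * DB)) ^ 2 / 2 * (σ + σ') ^ 2
        ≤ ((7 * DA * DB + 2 * (DA + DB)) * d) ^ 2 := by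
  set c := 1713 / 900 + 437 / 150 * (DA * DB) with hc_def
  have hc : 0 ≤ c := by positivity
  constructor
  · have := sq_le_add_sq_of_sub_le hd (mul_nonneg hc hσ.1) (mul_nonneg hc hσ'.1) hp.1 hg.1
    linarith [show (c * σ + c * σ') ^ 2 / 2 = c ^ 2 / 2 * (σ + σ') ^ 2 by ring]
  · have hp2 := pow_le_pow_left₀ hp0 hp.2 2
    have hg2 := pow_le_pow_left₀ hg0 hg.2 2
    have hσσ' : (σ + σ') ^ 2 ≤ (2 * d) ^ 2 := pow_le_pow_left₀ (by linarith) (by linarith) 2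
    have := mul_le_mul_of_nonneg_right (cross_const_le DA DB hDA hDB) (sq_nonneg d)
    rw [← hc_def] at this
    nlinarith [mul_le_mul_of_nonneg_left hσσ' (by positivity : (0:ℝ) ≤ c ^ 2 / 2)]

section Embedding

variable {X : Type*} [MetricSpace X]

def NoncontractingLipschitzOn {Y : Type*} [MetricSpace Y] (D : ℝ)
    (φ : X → Y) (s : Set X) : Prop :=
  ∀ x ∈ s, ∀ y ∈ s, dist x y ≤ dist (φ x) (φ y) ∧ dist (φ x) (φ y) ≤ D * dist x y

def ExtendsAcross {Y : Type*} [MetricSpace Y] (A B : Set X) (DA DB : ℝ) (φB G : X → Y) : Prop :=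
  EqOn G φB B ∧ (∀ x ∈ A, ∀ y ∈ A, dist (G x) (G y) ≤ 1311 / 200 * (DA * DB) * dist x y) ∧
    ∀ x ∈ A, ∀ y ∈ B, dist (G x) (G y) ≤ (437 / 150 * (DA * DB) + 871 / 300 * DB) * dist x y ∧
      dist x y - (1713 / 900 + 437 / 150 * (DA * DB)) * infDist x B ≤ dist (G x) (G y)

theorem NoncontractingLipschitzOn.exists_extension_closure {Y : Type*} [MetricSpace Y]
    [CompleteSpace Y] {D : ℝ} {φ : X → Y} {s : Set X} (h : NoncontractingLipschitzOn D φ s) :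
    ∃ ψ : X → Y, EqOn ψ φ s ∧ NoncontractingLipschitzOn D ψ (closure s) := by
  have hlip : LipschitzOnWith D.toNNReal φ s :=
    LipschitzOnWith.of_dist_le' fun x hx y hy => (h x hx y hy).2
  have hlim : ∀ x ∈ closure s, Tendsto φ (𝓝[s] x) (𝓝 (extendFrom s φ x)) := by
    intro x hx
    have := mem_closure_iff_nhdsWithin_neBot.1 hx
    exact tendsto_extendFrom (CompleteSpace.complete (((cauchy_nhds (a := x)).mono
      nhdsWithin_le_nhds).map_of_le hlip.uniformContinuousOn inf_le_right))
  refine ⟨extendFrom s φ, extendFrom_extends hlip.continuousOn, fun x hx y hy => ?_⟩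
  have := mem_closure_iff_nhdsWithin_neBot.1 hx
  have := mem_closure_iff_nhdsWithin_neBot.1 hy
  have hd : Tendsto (fun p : X × X => dist p.1 p.2) (𝓝[s] x ×ˢ 𝓝[s] y) (𝓝 (dist x y)) :=
    ((continuous_dist.tendsto (x, y)).mono_left (by
      rw [nhds_prod_eq]; exact prod_mono nhdsWithin_le_nhds nhdsWithin_le_nhds))
  have hφ : Tendsto (fun p : X × X => dist (φ p.1) (φ p.2)) (𝓝[s] x ×ˢ 𝓝[s] y)
      (𝓝 (dist (extendFrom s φ x) (extendFrom s φ y))) :=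
    ((hlim x hx).comp tendsto_fst).dist ((hlim y hy).comp tendsto_snd)
  have hs : ∀ᶠ p : X × X in 𝓝[s] x ×ˢ 𝓝[s] y, p.1 ∈ s ∧ p.2 ∈ s :=
    prod_mem_prod self_mem_nhdsWithin self_mem_nhdsWithin
  exact ⟨le_of_tendsto_of_tendsto hd hφ (hs.mono fun p hp => (h _ hp.1 _ hp.2).1),
    le_of_tendsto_of_tendsto hφ (hd.const_mul D) (hs.mono fun p hp => (h _ hp.1 _ hp.2).2)⟩

theorem IsClosed.exists_mem_dist_le_mul_infDist {B : Set X} (hB : IsClosed B) (hne : B.Nonempty)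
    {κ : ℝ} (hκ : 1 < κ) (x : X) : ∃ y ∈ B, dist x y ≤ κ * infDist x B := by
  rcases (infDist_nonneg (x := x) (s := B)).eq_or_lt with h0 | hpos
  · exact ⟨x, (hB.mem_iff_infDist_zero hne).2 h0.symm, by simp [← h0]⟩
  · obtain ⟨y, hy, hxy⟩ := (infDist_lt_iff hne).1 (lt_mul_of_one_lt_left hpos hκ)
    exact ⟨y, hy, hxy.le⟩

theorem exists_infDist_separated_net (A B : Set X) :
    ∃ S ⊆ A, S.Pairwise (fun s t => 2 / 11 * (infDist s B + infDist t B) ≤ dist s t) ∧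
      ∀ u ∈ A, ∃ s ∈ S, dist u s ≤ 4 / 9 * infDist u B ∧ infDist s B ≤ 13 / 9 * infDist u B := by
  obtain ⟨S, -, hSA, hS, hmax⟩ := exists_maximal_pairwise
    (r := fun s t => 2 / 11 * (infDist s B + infDist t B) ≤ dist s t)
    (fun s t h => by rwa [add_comm, dist_comm]) (empty_subset A) (pairwise_empty _)
  refine ⟨S, hSA, hS, fun u hu => ?_⟩
  by_cases huS : u ∈ S
  · exact ⟨u, huS, by simp [infDist_nonneg], by linarith [infDist_nonneg (x := u) (s := B)]⟩
  obtain ⟨s, hs, -, hclose⟩ := hmax u hu huS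
  have hρ : infDist s B ≤ infDist u B + dist u s := by
    rw [dist_comm]; exact infDist_le_infDist_add_dist
  exact ⟨s, hs, by linarith, by linarith⟩

variable {Fa Fb : Type*} [NormedAddCommGroup Fa] [InnerProductSpace ℝ Fa]
  [NormedAddCommGroup Fb] [InnerProductSpace ℝ Fb] [FiniteDimensional ℝ Fb]

/- Separation ratio `2/11` and near-point slack `101/100` give: net points within `(4/9) d(u, B)`
of `u`, `d(q s, q t) ≤ (1 + (101/100)(11/2)) d(s, t) = (1311/200) d(s, t)`, the constant
`(4/9)(1311/200) = 437/150`, and `d(u, q s) ≤ (4/9 + (101/100)(13/9)) d(u, B) = (1713/900) d(u, B)`. -/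
theorem exists_anchored_extension {A B : Set X} (hB : IsClosed B) (hne : B.Nonempty)
    {DA DB : ℝ} (hDA : 0 ≤ DA) (hDB : 0 ≤ DB) {φA : X → Fa} {φB : X → Fb}
    (hφA : NoncontractingLipschitzOn DA φA A)
    (hφB : ∀ x ∈ B, ∀ y ∈ B, dist (φB x) (φB y) ≤ DB * dist x y) :
    ∃ g : X → Fb, (∀ u v, dist (g u) (g v) ≤ 1311 / 200 * DB * dist (φA u) (φA v)) ∧
      ∀ u ∈ A, ∃ z ∈ B, dist (g u) (φB z) ≤ 437 / 150 * (DA * DB) * infDist u B ∧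
        dist u z ≤ 1713 / 900 * infDist u B := by
  choose q hqB hq using hB.exists_mem_dist_le_mul_infDist hne (κ := 101 / 100) (by norm_num)
  obtain ⟨S, hSA, hSsep, hSnet⟩ := exists_infDist_separated_net A B
  have hqS : ∀ s ∈ S, ∀ t ∈ S, dist (q s) (q t) ≤ 1311 / 200 * dist s t := by
    intro s hs t ht
    rcases eq_or_ne s t with rfl | hst
    · simp
    have hsep : 2 / 11 * (infDist s B + infDist t B) ≤ dist s t := hSsep hs ht hst
    linarith [dist_triangle4 (q s) s t (q t), dist_comm (q s) s, dist_comm t (q t), hq s, hq t]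
  obtain ⟨ext, hext, hextlip⟩ := kirszbraun (L := 1311 / 200 * DB) (by positivity)
    ((fun s => (φA s, φB (q s))) '' S) (by
      rintro _ ⟨s, hs, rfl⟩ _ ⟨t, ht, rfl⟩
      simp only [← dist_eq_norm]
      calc dist (φB (q s)) (φB (q t)) ≤ DB * dist (q s) (q t) := hφB _ (hqB s) _ (hqB t)
        _ ≤ DB * (1311 / 200 * dist (φA s) (φA t)) := by
          gcongr
          exact (hqS s hs t ht).trans (by gcongr; exact (hφA s (hSA hs) t (hSA ht)).1)
        _ = _ := by ring)
  refine ⟨fun u => ext (φA u), fun u v => by simpa only [dist_eq_norm] using hextlip _ _,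
    fun u hu => ?_⟩
  obtain ⟨s, hs, hus, hρs⟩ := hSnet u hu
  have hanchor : ext (φA s) = φB (q s) := hext _ ⟨s, hs, rfl⟩
  refine ⟨q s, hqB s, ?_, ?_⟩
  · calc dist (ext (φA u)) (φB (q s)) = dist (ext (φA u)) (ext (φA s)) := by rw [hanchor]
      _ ≤ 1311 / 200 * DB * dist (φA u) (φA s) := by
        simpa only [dist_eq_norm] using hextlip _ _
      _ ≤ 1311 / 200 * DB * (DA * (4 / 9 * infDist u B)) := by
        gcongr
        exact (hφA u hu s (hSA hs)).2.trans (by gcongr)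
      _ = _ := by ring
  · linarith [dist_triangle u s (q s), hq s]

theorem exists_extendsAcross {A B : Set X} (hB : IsClosed B) {DA DB : ℝ}
    (hDA : 1 ≤ DA) (hDB : 1 ≤ DB) {φA : X → Fa} {φB : X → Fb}
    (hφA : NoncontractingLipschitzOn DA φA A) (hφB : NoncontractingLipschitzOn DB φB B) :
    ∃ G : X → Fb, ExtendsAcross A B DA DB φB G := by
  classical
  rcases B.eq_empty_or_nonempty with rfl | hne
  · exact ⟨0, by simp, fun x _ y _ => by simp only [Pi.zero_apply, dist_self]; positivity,
      by simp⟩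
  obtain ⟨g, hglip, hganchor⟩ := exists_anchored_extension hB hne (by linarith) (by linarith)
    hφA fun x hx y hy => (hφB x hx y hy).2
  have hP : 1 ≤ DA * DB := one_le_mul_of_one_le_of_one_le hDA hDB
  have hcross : ∀ x ∈ A, ∀ y ∈ B,
      dist (B.piecewise φB g x) (B.piecewise φB g y)
          ≤ (437 / 150 * (DA * DB) + 871 / 300 * DB) * dist x y ∧
        dist x y - (1713 / 900 + 437 / 150 * (DA * DB)) * infDist x B
          ≤ dist (B.piecewise φB g x) (B.piecewise φB g y) := by
    intro x hx y hy
    have hxy : infDist x B ≤ dist x y := infDist_le_dist_of_mem hy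
    rw [piecewise_eq_of_mem _ _ _ hy]
    by_cases hxB : x ∈ B
    · rw [piecewise_eq_of_mem _ _ _ hxB, infDist_zero_of_mem hxB]
      obtain ⟨h1, h2⟩ := hφB x hxB y hy
      constructor <;> nlinarith [dist_nonneg (x := x) (y := y)]
    rw [piecewise_eq_of_notMem _ _ _ hxB]
    obtain ⟨z, hz, hgz, hxz⟩ := hganchor x hx
    obtain ⟨h1, h2⟩ := hφB z hz y hy
    have hzy : dist z y ≤ dist x z + dist x y := by
      linarith [dist_triangle z x y, dist_comm z x]
    constructor
    · calc dist (g x) (φB y) ≤ dist (g x) (φB z) + dist (φB z) (φB y) := dist_triangle _ _ _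
        _ ≤ 437 / 150 * (DA * DB) * infDist x B + DB * (1713 / 900 * infDist x B + dist x y) :=
          add_le_add hgz (h2.trans (by gcongr; linarith))
        _ ≤ 437 / 150 * (DA * DB) * dist x y + DB * (1713 / 900 * dist x y + dist x y) := by
          gcongr
        _ = _ := by ring
    · linarith [dist_triangle_left (φB z) (φB y) (g x), dist_triangle x z y]
  refine ⟨B.piecewise φB g, fun x hx => piecewise_eq_of_mem _ _ _ hx, fun x hx y hy => ?_,
    hcross⟩
  have hmono : 437 / 150 * (DA * DB) + 871 / 300 * DB ≤ 1311 / 200 * (DA * DB) := by nlinarith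
  by_cases hxB : x ∈ B
  · by_cases hyB : y ∈ B
    · rw [piecewise_eq_of_mem _ _ _ hxB, piecewise_eq_of_mem _ _ _ hyB]
      nlinarith [(hφB x hxB y hyB).2, dist_nonneg (x := x) (y := y)]
    · rw [dist_comm, dist_comm x]
      exact (hcross y hy x hxB).1.trans (by gcongr)
  · by_cases hyB : y ∈ B
    · exact (hcross x hx y hyB).1.trans (by gcongr)
    · rw [piecewise_eq_of_notMem _ _ _ hxB, piecewise_eq_of_notMem _ _ _ hyB]
      calc dist (g x) (g y) ≤ 1311 / 200 * DB * dist (φA x) (φA y) := hglip x y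
        _ ≤ 1311 / 200 * DB * (DA * dist x y) := by gcongr; exact (hφA x hx y hy).2
        _ = _ := by ring

noncomputable def unionEmbedding {a b : ℕ} (A B : Set X) (DA DB : ℝ)
    (F : X → EuclideanSpace ℝ (Fin a)) (G : X → EuclideanSpace ℝ (Fin b)) (x : X) :
    EuclideanSpace ℝ (Fin (a + b + 1)) :=
  euclideanAppend (F x) (G x)
    ((1713 / 900 + 437 / 150 * (DA * DB)) / √2 * (infDist x A - infDist x B))

theorem dist_unionEmbedding_sq {a b : ℕ} (A B : Set X) (DA DB : ℝ)
    (F : X → EuclideanSpace ℝ (Fin a)) (G : X → EuclideanSpace ℝ (Fin b)) (x y : X) :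
    dist (unionEmbedding A B DA DB F G x) (unionEmbedding A B DA DB F G y) ^ 2
      = dist (F x) (F y) ^ 2 + dist (G x) (G y) ^ 2 + (1713 / 900 + 437 / 150 * (DA * DB)) ^ 2 / 2
        * (infDist x A - infDist x B - (infDist y A - infDist y B)) ^ 2 := by
  rw [unionEmbedding, unionEmbedding, dist_euclideanAppend_sq, ← mul_sub, mul_pow, div_pow,
    Real.sq_sqrt zero_le_two]

theorem unionEmbedding_sq_bounds {A B : Set X} (hAB : A ∪ B = univ) {a b : ℕ} {DA DB : ℝ}
    (hDA : 1 ≤ DA) (hDB : 1 ≤ DB) {φA F : X → EuclideanSpace ℝ (Fin a)}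
    {φB G : X → EuclideanSpace ℝ (Fin b)} (hφA : NoncontractingLipschitzOn DA φA A)
    (hφB : NoncontractingLipschitzOn DB φB B) (hF : ExtendsAcross B A DB DA φA F)
    (hG : ExtendsAcross A B DA DB φB G) (x y : X) :
    dist x y ^ 2 ≤ dist (unionEmbedding A B DA DB F G x) (unionEmbedding A B DA DB F G y) ^ 2 ∧
      dist (unionEmbedding A B DA DB F G x) (unionEmbedding A B DA DB F G y) ^ 2
        ≤ ((7 * DA * DB + 2 * (DA + DB)) * dist x y) ^ 2 := by
  obtain ⟨hFA, hFB, hFcross⟩ := hF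
  obtain ⟨hGB, hGA, hGcross⟩ := hG
  simp only [mul_comm DB DA] at hFcross
  have hρ : ∀ (C : Set X) x y, |infDist y C - infDist x C| ≤ dist x y := fun C x y => by
    simpa [Real.dist_eq, abs_sub_comm, dist_comm] using (lipschitz_infDist_pt C).dist_le_mul x y
  revert x y
  refine forall_pair_of_union_eq_univ hAB (fun x y h => by simpa only [dist_comm] using h)
    (fun x hx y hy => ?_) (fun x hx y hy => ?_) (fun x hx y hy => ?_)
  · rw [dist_unionEmbedding_sq, hFA hx, hFA hy]
    refine sq_bounds_of_same_side hDA hDB dist_nonneg (hφA x hx y hy) dist_nonneg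
      (hGA x hx y hy) ((le_of_eq ?_).trans (hρ B x y))
    simp only [infDist_zero_of_mem hx, infDist_zero_of_mem hy]
    congr 1; ring
  · rw [dist_unionEmbedding_sq, hGB hx, hGB hy]
    have := sq_bounds_of_same_side hDB hDA dist_nonneg (hφB x hx y hy) dist_nonneg
      (hFB x hx y hy) ((hρ A y x).trans_eq (dist_comm y x))
    rw [mul_comm DB DA, show 7 * DB * DA + 2 * (DB + DA) = 7 * DA * DB + 2 * (DA + DB) by ring]
      at this
    simp only [infDist_zero_of_mem hx, infDist_zero_of_mem hy, sub_zero]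
    constructor <;> linarith
  · have hs : (infDist x A - infDist x B - (infDist y A - infDist y B)) ^ 2
        = (infDist y A + infDist x B) ^ 2 := by
      simp only [infDist_zero_of_mem hx, infDist_zero_of_mem hy]; ring
    rw [dist_unionEmbedding_sq, hs, dist_comm (F x), dist_comm x y]
    refine sq_bounds_of_cross hDA hDB dist_nonneg
      ⟨infDist_nonneg, infDist_le_dist_of_mem hx⟩
      ⟨infDist_nonneg, (infDist_le_dist_of_mem hy).trans_eq (dist_comm x y)⟩
      dist_nonneg dist_nonneg (hFcross y hy x hx).symm ?_
    simpa only [dist_comm x y] using (hGcross x hx y hy).symm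

theorem exists_noncontracting_embedding_of_isClosed {A B : Set X} (hA : IsClosed A)
    (hB : IsClosed B) (hAB : A ∪ B = univ) {a b : ℕ} {DA DB : ℝ} (hDA : 1 ≤ DA) (hDB : 1 ≤ DB)
    {φA : X → EuclideanSpace ℝ (Fin a)} {φB : X → EuclideanSpace ℝ (Fin b)}
    (hφA : NoncontractingLipschitzOn DA φA A) (hφB : NoncontractingLipschitzOn DB φB B) :
    ∃ Ψ : X → EuclideanSpace ℝ (Fin (a + b + 1)),
      NoncontractingLipschitzOn (7 * DA * DB + 2 * (DA + DB)) Ψ univ ∧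
      (∀ u ∈ A, ∀ v ∈ A, dist (φA u) (φA v) ≤ dist (Ψ u) (Ψ v)) ∧
      (∀ u ∈ B, ∀ v ∈ B, dist (φB u) (φB v) ≤ dist (Ψ u) (Ψ v)) := by
  obtain ⟨F, hF⟩ := exists_extendsAcross hA hDB hDA hφB hφA
  obtain ⟨G, hG⟩ := exists_extendsAcross hB hDA hDB hφA hφB
  have key := unionEmbedding_sq_bounds hAB hDA hDB hφA hφB hF hG
  have hsqrt : ∀ {d D : ℝ}, 0 ≤ d → 0 ≤ D → d ^ 2 ≤ D ^ 2 → d ≤ D :=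
    fun hd hD h => (pow_le_pow_iff_left₀ hd hD two_ne_zero).1 h
  refine ⟨unionEmbedding A B DA DB F G, fun x _ y _ => ⟨hsqrt dist_nonneg dist_nonneg
    (key x y).1, hsqrt dist_nonneg (by positivity) (key x y).2⟩, fun u hu v hv => ?_,
    fun u hu v hv => ?_⟩ <;> refine hsqrt dist_nonneg dist_nonneg ?_ <;>
    rw [dist_unionEmbedding_sq]
  · rw [← hF.1 hu, ← hF.1 hv]; nlinarith [sq_nonneg (dist (G u) (G v))]
  · rw [← hG.1 hu, ← hG.1 hv]; nlinarith [sq_nonneg (dist (F u) (F v))]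

end Embedding

/-- The "furthermore" clause of the main theorem: given non-contracting embeddings
`φ_A : A → ℝ^a` and `φ_B : B → ℝ^b` with `‖φ_A‖_Lip ≤ D_A` and `‖φ_B‖_Lip ≤ D_B`,
there is a non-contracting embedding `Ψ : X → ℝ^(a+b+1)` with
`‖Ψ‖_Lip ≤ 7·D_A·D_B + 2·(D_A + D_B)` that moreover dominates `φ_A` on `A` and
`φ_B` on `B`. -/
theorem union_of_euclidean_noncontracting_embedding
    {X : Type*} [MetricSpace X] (A B : Set X) (hAB : A ∪ B = Set.univ)
    (a b : ℕ) (DA DB : ℝ) (hDA : 1 ≤ DA) (hDB : 1 ≤ DB)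
    (φA : X → EuclideanSpace ℝ (Fin a))
    (hφA : ∀ x ∈ A, ∀ y ∈ A,
      dist x y ≤ dist (φA x) (φA y) ∧ dist (φA x) (φA y) ≤ DA * dist x y)
    (φB : X → EuclideanSpace ℝ (Fin b))
    (hφB : ∀ x ∈ B, ∀ y ∈ B,
      dist x y ≤ dist (φB x) (φB y) ∧ dist (φB x) (φB y) ≤ DB * dist x y) :
    ∃ Ψ : X → EuclideanSpace ℝ (Fin (a + b + 1)),
      (∀ x y : X, dist x y ≤ dist (Ψ x) (Ψ y)) ∧
      (∀ x y : X, dist (Ψ x) (Ψ y) ≤ (7 * DA * DB + 2 * (DA + DB)) * dist x y) ∧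
      (∀ u ∈ A, ∀ v ∈ A, dist (φA u) (φA v) ≤ dist (Ψ u) (Ψ v)) ∧
      (∀ u ∈ B, ∀ v ∈ B, dist (φB u) (φB v) ≤ dist (Ψ u) (Ψ v)) := by
  obtain ⟨ψA, hψA_eq, hψA⟩ := NoncontractingLipschitzOn.exists_extension_closure hφA
  obtain ⟨ψB, hψB_eq, hψB⟩ := NoncontractingLipschitzOn.exists_extension_closure hφB
  have hAB' : closure A ∪ closure B = univ :=
    univ_subset_iff.1 (hAB ▸ union_subset_union subset_closure subset_closure)
  obtain ⟨Ψ, hΨ, hΨA, hΨB⟩ := exists_noncontracting_embedding_of_isClosed isClosed_closure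
    isClosed_closure hAB' hDA hDB hψA hψB
  refine ⟨Ψ, fun x y => (hΨ x trivial y trivial).1, fun x y => (hΨ x trivial y trivial).2,
    fun u hu v hv => ?_, fun u hu v hv => ?_⟩
  · rw [← hψA_eq hu, ← hψA_eq hv]
    exact hΨA u (subset_closure hu) v (subset_closure hv)
  · rw [← hψB_eq hu, ← hψB_eq hv]
    exact hΨB u (subset_closure hu) v (subset_closure hv)
end

section
/- Let (X,d) be a finite metric space with X = A ∪ B, and let α > 0. Then there exists an α-cover A' ⊆ A of A with respect to B, i.e., a set A' ⊆ A such that: (1) for every a ∈ A there is a' ∈ A' with d(a',B) ≤ d(a,B) and d(a,a') ≤ α·d(a,B); and (2) for every two distinct a₁', a₂' ∈ A', one has d(a₁',a₂') ≥ α·min(d(a₁',B), d(a₂',B)). -/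
open Metric

lemma exists_alpha_cover_finset
    {X : Type*} [MetricSpace X] (B : Set X) (α : ℝ) (hα : 0 < α)
    (A : Finset X) :
    ∃ A' : Finset X, A' ⊆ A ∧
      (∀ a ∈ A, ∃ a' ∈ A',
        Metric.infDist a' B ≤ Metric.infDist a B ∧
        dist a a' ≤ α * Metric.infDist a B) ∧
      (∀ a₁ ∈ A', ∀ a₂ ∈ A', a₁ ≠ a₂ →
        α * min (Metric.infDist a₁ B) (Metric.infDist a₂ B) ≤ dist a₁ a₂) := by
  classical
  induction A using Finset.strongInduction with
  | _ A ih =>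
    rcases A.eq_empty_or_nonempty with rfl | hne
    · exact ⟨∅, Finset.Subset.refl _, by simp, by simp⟩
    · obtain ⟨a₀, ha₀, hmin⟩ := A.exists_min_image (fun a => Metric.infDist a B) hne
      set A₁ := A.filter (fun a => α * Metric.infDist a B < dist a a₀) with hA₁
      have hsub : A₁ ⊂ A := by
        refine Finset.ssubset_iff_of_subset (Finset.filter_subset _ _) |>.mpr ⟨a₀, ha₀, ?_⟩
        simp only [hA₁, Finset.mem_filter, dist_self, not_and, not_lt]
        intro _
        exact mul_nonneg hα.le Metric.infDist_nonneg
      obtain ⟨A₁', hsub', h1, h2⟩ := ih A₁ hsub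
      refine ⟨insert a₀ A₁', ?_, ?_, ?_⟩
      · intro x hx
        rcases Finset.mem_insert.mp hx with rfl | hx
        · exact ha₀
        · exact (Finset.filter_subset _ _) (hsub' hx)
      · intro a ha
        by_cases h : α * Metric.infDist a B < dist a a₀
        · obtain ⟨a', ha', h'⟩ := h1 a (Finset.mem_filter.mpr ⟨ha, h⟩)
          exact ⟨a', Finset.mem_insert_of_mem ha', h'⟩
        · exact ⟨a₀, Finset.mem_insert_self _ _, hmin a ha, not_lt.mp h⟩
      · intro a₁ h₁ a₂ h₂ hne'
        rcases Finset.mem_insert.mp h₁ with h₁e | h₁m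
        · rcases Finset.mem_insert.mp h₂ with h₂e | h₂m
          · exact absurd (h₁e.trans h₂e.symm) hne'
          · have hlt := (Finset.mem_filter.mp (hsub' h₂m)).2
            rw [← h₁e] at hlt
            calc α * min (Metric.infDist a₁ B) (Metric.infDist a₂ B)
                ≤ α * Metric.infDist a₂ B :=
                  mul_le_mul_of_nonneg_left (min_le_right _ _) hα.le
              _ ≤ dist a₁ a₂ := by rw [dist_comm]; exact hlt.le
        · rcases Finset.mem_insert.mp h₂ with h₂e | h₂m
          · have hlt := (Finset.mem_filter.mp (hsub' h₁m)).2
            rw [← h₂e] at hlt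
            calc α * min (Metric.infDist a₁ B) (Metric.infDist a₂ B)
                ≤ α * Metric.infDist a₁ B :=
                  mul_le_mul_of_nonneg_left (min_le_left _ _) hα.le
              _ ≤ dist a₁ a₂ := hlt.le
          · exact h2 a₁ h₁m a₂ h₂m hne'

/-- Existence of an `α`-cover: for a finite metric space `X = A ∪ B` and `α > 0`,
there is `A' ⊆ A` such that (1) every `a ∈ A` has `a' ∈ A'` with
`d(a',B) ≤ d(a,B)` and `d(a,a') ≤ α·d(a,B)`, and (2) distinct points of `A'` are
at distance at least `α·min(d(a₁',B), d(a₂',B))`. -/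
theorem exists_alpha_cover
    {X : Type*} [MetricSpace X] [Fintype X] (A B : Set X)
    (hAB : A ∪ B = Set.univ) (α : ℝ) (hα : 0 < α) :
    ∃ A' : Set X, A' ⊆ A ∧
      (∀ a ∈ A, ∃ a' ∈ A',
        Metric.infDist a' B ≤ Metric.infDist a B ∧
        dist a a' ≤ α * Metric.infDist a B) ∧
      (∀ a₁ ∈ A', ∀ a₂ ∈ A', a₁ ≠ a₂ →
        α * min (Metric.infDist a₁ B) (Metric.infDist a₂ B) ≤ dist a₁ a₂) := by
  classical
  obtain ⟨A', hsub, h1, h2⟩ := exists_alpha_cover_finset B α hα (A.toFinite.toFinset)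
  refine ⟨↑A', ?_, ?_, ?_⟩
  · intro x hx
    exact A.toFinite.mem_toFinset.mp (hsub hx)
  · intro a ha
    obtain ⟨a', ha', h'⟩ := h1 a (A.toFinite.mem_toFinset.mpr ha)
    exact ⟨a', ha', h'⟩
  · intro a₁ h₁ a₂ h₂ hne
    exact h2 a₁ h₁ a₂ h₂ hne
end

section
/- Let (X,d) be a finite metric space with X = A ∪ B, B nonempty, and let α > 0. Let A' ⊆ A be an α-cover for A with respect to B, and let f : A' → B be any map such that d(a', f(a')) = d(a',B) for every a' ∈ A' (i.e., f(a') is a point of B closest to a'). Then f is Lipschitz with Lipschitz constant at most 2·(1 + 1/α), i.e., d(f(a₁'), f(a₂')) ≤ 2·(1 + 1/α)·d(a₁', a₂') for all a₁', a₂' ∈ A'. -/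
/-- If `A'` is an `α`-cover for `A` with respect to `B` in a finite metric space
`X = A ∪ B` (with `B` nonempty), and `f` maps every `a' ∈ A'` to a closest point
of `B`, then `f` is `2·(1 + 1/α)`-Lipschitz on `A'`. -/
theorem closest_point_map_lipschitz
    {X : Type*} [MetricSpace X] [Fintype X] (A B : Set X)
    (hAB : A ∪ B = Set.univ) (hB : B.Nonempty) (α : ℝ) (hα : 0 < α)
    (A' : Set X) (hA'A : A' ⊆ A)
    (hcov1 : ∀ a ∈ A, ∃ a' ∈ A',
      Metric.infDist a' B ≤ Metric.infDist a B ∧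
      dist a a' ≤ α * Metric.infDist a B)
    (hcov2 : ∀ a₁ ∈ A', ∀ a₂ ∈ A', a₁ ≠ a₂ →
      α * min (Metric.infDist a₁ B) (Metric.infDist a₂ B) ≤ dist a₁ a₂)
    (f : X → X)
    (hf : ∀ a ∈ A', f a ∈ B ∧ dist a (f a) = Metric.infDist a B) :
    ∀ a₁ ∈ A', ∀ a₂ ∈ A',
      dist (f a₁) (f a₂) ≤ 2 * (1 + 1 / α) * dist a₁ a₂ := by
  intro a₁ h₁ a₂ h₂
  by_cases heq : a₁ = a₂
  · subst heq; simp
  · obtain ⟨hfB₁, hfd₁⟩ := hf a₁ h₁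
    obtain ⟨hfB₂, hfd₂⟩ := hf a₂ h₂
    set R₁ := Metric.infDist a₁ B with hR₁
    set R₂ := Metric.infDist a₂ B with hR₂
    set d := dist a₁ a₂ with hd
    have hmin : α * min R₁ R₂ ≤ d := hcov2 a₁ h₁ a₂ h₂ heq
    have hminle : min R₁ R₂ ≤ d / α := by
      rw [le_div_iff₀ hα]; linarith [hmin]
    have hl1 : R₁ ≤ R₂ + d := by
      simpa [hR₁, hR₂, hd, dist_comm] using
        Metric.infDist_le_infDist_add_dist (x := a₁) (y := a₂) (s := B)
    have hl2 : R₂ ≤ R₁ + d := by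
      simpa [hR₁, hR₂, hd, dist_comm] using
        Metric.infDist_le_infDist_add_dist (x := a₂) (y := a₁) (s := B)
    have hsum : R₁ + R₂ ≤ 2 * (d / α) + d := by
      rcases le_total R₁ R₂ with h | h
      · have hm : R₁ ≤ d / α := by simpa [min_eq_left h] using hminle
        linarith
      · have hm : R₂ ≤ d / α := by simpa [min_eq_right h] using hminle
        linarith
    have htri : dist (f a₁) (f a₂) ≤ R₁ + d + R₂ := by
      calc dist (f a₁) (f a₂) ≤ dist (f a₁) a₁ + dist a₁ (f a₂) := dist_triangle _ _ _
        _ ≤ dist (f a₁) a₁ + (dist a₁ a₂ + dist a₂ (f a₂)) := by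
            linarith [dist_triangle a₁ a₂ (f a₂)]
        _ = R₁ + d + R₂ := by rw [dist_comm (f a₁) a₁, hfd₁, hfd₂]; ring
    have : 2 * (1 + 1 / α) * d = 2 * (d / α) + 2 * d := by field_simp; ring
    linarith
end

section
/- Let (X,d) be a separable metric space and let V be either the Euclidean space ℝ^m or the separable infinite-dimensional Hilbert space ℓ². Let D ≥ 1. Assume that for every finite subset Y ⊆ X there exists a non-contracting embedding f : Y → V with ‖f‖_Lip ≤ D. Then there exists a non-contracting embedding f : X → V with ‖f‖_Lip ≤ D. -/
/-! Let `u` be a dense sequence in `X`. By Gram–Schmidt, any configuration `v 0, …, v N` in `V`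
has an isometric copy whose `i`-th point lies in the finite-dimensional space `F i` of a fixed
flag (`F i = span (b 0, …, b i)` for a Hilbert basis `b` of `ℓ²`). Applying this to the images of
`u 0, …, u N` and translating `u 0` to the origin, the `i`-th point stays in the compact set
`F i ∩ closedBall 0 (D * dist (u i) (u 0))` for every `N`, so by Tychonoff a subsequence converges
at every `i`. The limit is non-contracting and `D`-Lipschitz on the sequence, so it extends to
`X`, and both bounds pass to the closure. -/

open Filter Topology Submodule InnerProductSpace RealInnerProductSpace

def NoncontractingLipOn {ι X V : Type*} [MetricSpace X] [MetricSpace V] (D : ℝ) (u : ι → X)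
    (g : ι → V) (s : Set ι) : Prop :=
  ∀ i ∈ s, ∀ j ∈ s, dist (u i) (u j) ≤ dist (g i) (g j) ∧ dist (g i) (g j) ≤ D * dist (u i) (u j)

section Configurations

variable {V : Type*} [NormedAddCommGroup V] [InnerProductSpace ℝ V]
  {ι : Type*} [LinearOrder ι] [LocallyFiniteOrderBot ι] [WellFoundedLT ι]

theorem dist_eq_dist_of_inner_eq {a b c d : V} (haa : ⟪a, a⟫ = ⟪c, c⟫) (hab : ⟪a, b⟫ = ⟪c, d⟫)
    (hbb : ⟪b, b⟫ = ⟪d, d⟫) : dist a b = dist c d := by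
  rw [dist_eq_norm, dist_eq_norm, ← sq_eq_sq₀ (norm_nonneg _) (norm_nonneg _),
    norm_sub_sq_real, norm_sub_sq_real, ← real_inner_self_eq_norm_sq,
    ← real_inner_self_eq_norm_sq, ← real_inner_self_eq_norm_sq, ← real_inner_self_eq_norm_sq,
    haa, hab, hbb]

theorem inner_gramSchmidtNormed_smul_gramSchmidtNormed (f : ι → V) (j k : ι) :
    ⟪gramSchmidtNormed ℝ f j, gramSchmidtNormed ℝ f k⟫ • gramSchmidtNormed ℝ f j =
      if j = k then gramSchmidtNormed ℝ f k else 0 := by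
  split_ifs with hjk
  · subst hjk
    by_cases h0 : gramSchmidtNormed ℝ f j = 0
    · simp [h0]
    · simp [gramSchmidtNormed_unit_length' h0]
  · simp [gramSchmidtNormed, real_inner_smul_left, real_inner_smul_right,
      gramSchmidt_orthogonal ℝ f hjk]

theorem sum_inner_gramSchmidtNormed_smul (f : ι → V) (s : Finset ι) {x : V}
    (hx : x ∈ span ℝ (gramSchmidtNormed ℝ f '' s)) :
    ∑ j ∈ s, ⟪gramSchmidtNormed ℝ f j, x⟫ • gramSchmidtNormed ℝ f j = x := by
  induction hx using Submodule.span_induction with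
  | mem x hx =>
    obtain ⟨k, hk, rfl⟩ := hx
    simp_rw [inner_gramSchmidtNormed_smul_gramSchmidtNormed]
    simp [Finset.mem_coe.1 hk]
  | zero => simp
  | add x y _ _ hx hy =>
    simp only [inner_add_right, add_smul, Finset.sum_add_distrib, hx, hy]
  | smul a x _ hx =>
    simp only [real_inner_smul_right, mul_smul, ← Finset.smul_sum, hx]

theorem inner_gramSchmidtNormed_eq_zero_of_lt (f : ι → V) {i j : ι} (hij : i < j) :
    ⟪gramSchmidtNormed ℝ f j, f i⟫ = 0 := by
  simp [gramSchmidtNormed, real_inner_smul_left, gramSchmidt_inv_triangular ℝ f hij]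

/-- The copy is `w i = ∑ k ≤ N, ⟪e k, v i⟫ • b k` with `e` the Gram–Schmidt basis of `v`:
`⟪e k, v i⟫ = 0` for `k > i` makes it triangular. -/
theorem exists_dist_eq_mem_span_Iic (b : ι → V) (hb : Orthonormal ℝ b) (v : ι → V) (N : ι) :
    ∃ w : ι → V, (∀ i ≤ N, ∀ j ≤ N, dist (w i) (w j) = dist (v i) (v j)) ∧
      ∀ i, w i ∈ span ℝ (b '' Set.Iic i) := by
  set e := gramSchmidtNormed ℝ v
  have hv : ∀ i ≤ N, v i ∈ span ℝ (e '' (Finset.Iic N : Set ι)) := fun i hi => by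
    rw [Finset.coe_Iic, span_gramSchmidtNormed]
    exact mem_span_gramSchmidt ℝ v hi
  have hgram : ∀ i ≤ N, ∀ j ≤ N,
      ⟪∑ k ∈ Finset.Iic N, ⟪e k, v i⟫ • b k, ∑ k ∈ Finset.Iic N, ⟪e k, v j⟫ • b k⟫ =
        ⟪v i, v j⟫ := fun i hi j _ => by
    conv_rhs => rw [← sum_inner_gramSchmidtNormed_smul v _ (hv i hi)]
    simp [e, hb.inner_sum, sum_inner, real_inner_smul_left]
  refine ⟨fun i => ∑ k ∈ Finset.Iic N, ⟪e k, v i⟫ • b k,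
    fun i hi j hj => dist_eq_dist_of_inner_eq (hgram i hi i hi) (hgram i hi j hj)
      (hgram j hj j hj), fun i => sum_mem fun k _ => ?_⟩
  rcases le_or_gt k i with hki | hik
  · exact smul_mem _ _ (subset_span ⟨k, hki, rfl⟩)
  · simp [e, inner_gramSchmidtNormed_eq_zero_of_lt v hik]

end Configurations

theorem Submodule.isCompact_inter_closedBall {V : Type*} [NormedAddCommGroup V]
    [NormedSpace ℝ V] (S : Submodule ℝ V) [FiniteDimensional ℝ S] (r : ℝ) :
    IsCompact ((S : Set V) ∩ Metric.closedBall 0 r) := by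
  convert (isCompact_closedBall (0 : S) r).image continuous_subtype_val using 1
  ext x
  simp [and_comm]

section Flag

variable {V : Type*} [NormedAddCommGroup V] [InnerProductSpace ℝ V]

structure IsCopyingFlag (F : ℕ → Submodule ℝ V) : Prop where
  mono : Monotone F
  finiteDimensional : ∀ i, FiniteDimensional ℝ (F i)
  exists_copy : ∀ (v : ℕ → V) (N : ℕ), ∃ w : ℕ → V,
    (∀ i ≤ N, ∀ j ≤ N, dist (w i) (w j) = dist (v i) (v j)) ∧ ∀ i, w i ∈ F i

theorem isCopyingFlag_top [FiniteDimensional ℝ V] :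
    IsCopyingFlag fun _ : ℕ => (⊤ : Submodule ℝ V) where
  mono := monotone_const
  finiteDimensional _ := inferInstance
  exists_copy v _ := ⟨v, fun _ _ _ _ => rfl, fun _ => mem_top⟩

theorem isCopyingFlag_span_Iic {b : ℕ → V} (hb : Orthonormal ℝ b) :
    IsCopyingFlag fun i => span ℝ (b '' Set.Iic i) where
  mono _ _ hij := span_mono (Set.image_mono (Set.Iic_subset_Iic.2 hij))
  finiteDimensional i := FiniteDimensional.span_of_finite ℝ ((Set.finite_Iic i).image b)
  exists_copy := exists_dist_eq_mem_span_Iic b hb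

theorem completeSpace_and_exists_isCopyingFlag_of_euclidean_or_l2
    (hV : (∃ m : ℕ, Nonempty (V ≃ₗᵢ[ℝ] EuclideanSpace ℝ (Fin m))) ∨
      Nonempty (V ≃ₗᵢ[ℝ] lp (fun _ : ℕ => ℝ) 2)) :
    CompleteSpace V ∧ ∃ F : ℕ → Submodule ℝ V, IsCopyingFlag F := by
  rcases hV with ⟨m, ⟨e⟩⟩ | ⟨⟨e⟩⟩
  · have := e.symm.toLinearEquiv.finiteDimensional
    exact ⟨FiniteDimensional.complete ℝ V, _, isCopyingFlag_top⟩
  · exact ⟨e.toIsometryEquiv.completeSpace, _,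
      isCopyingFlag_span_Iic (HilbertBasis.ofRepr e).orthonormal⟩

theorem IsCopyingFlag.exists_normalized_copy {X : Type*} [MetricSpace X]
    {F : ℕ → Submodule ℝ V} (hF : IsCopyingFlag F)
    {D : ℝ} (hD : 0 ≤ D) {u : ℕ → X} {g : ℕ → V} {N : ℕ}
    (hg : NoncontractingLipOn D u g (Set.Iic N)) :
    ∃ H : ℕ → V, (∀ i, H i ∈ (F i : Set V) ∩ Metric.closedBall 0 (D * dist (u i) (u 0))) ∧
      NoncontractingLipOn D u H (Set.Iic N) := by
  obtain ⟨w, hw, hwF⟩ := hF.exists_copy g N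
  refine ⟨fun i => if i ≤ N then w i - w 0 else 0, fun i => ?_, fun i hi j hj => ?_⟩
  · dsimp only
    split_ifs with hi
    · refine ⟨sub_mem (hwF i) (hF.mono i.zero_le (hwF 0)), ?_⟩
      rw [Metric.mem_closedBall, dist_zero_right, ← dist_eq_norm, hw i hi 0 N.zero_le]
      exact (hg i hi 0 N.zero_le).2
    · exact ⟨zero_mem _, Metric.mem_closedBall_self (by positivity)⟩
  · simp only [if_pos (Set.mem_Iic.1 hi), if_pos (Set.mem_Iic.1 hj), dist_sub_right,
      hw i hi j hj]
    exact hg i hi j hj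

end Flag

section Limit

variable {ι X V : Type*} [MetricSpace X] [MetricSpace V]

theorem exists_noncontractingLipOn_univ_of_Iic {D : ℝ} {u : ℕ → X} {K : ℕ → Set V}
    (hK : ∀ i, IsCompact (K i)) {H : ℕ → ℕ → V} (hHK : ∀ N i, H N i ∈ K i)
    (hH : ∀ N, NoncontractingLipOn D u (H N) (Set.Iic N)) :
    ∃ G : ℕ → V, NoncontractingLipOn D u G Set.univ := by
  obtain ⟨G, -, φ, hφ, hlim⟩ :=
    (isCompact_univ_pi hK).tendsto_subseq fun N => Set.mem_univ_pi.2 (hHK N)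
  refine ⟨G, fun i _ j _ => ?_⟩
  have hdist : Tendsto (fun n => dist (H (φ n) i) (H (φ n) j)) atTop (𝓝 (dist (G i) (G j))) :=
    ((continuous_apply i).tendsto G |>.comp hlim).dist ((continuous_apply j).tendsto G |>.comp hlim)
  have hev : ∀ᶠ n in atTop, i ≤ φ n ∧ j ≤ φ n :=
    (eventually_ge_atTop (max i j)).mono fun n hn =>
      max_le_iff.1 (hn.trans (hφ.id_le n))
  exact ⟨ge_of_tendsto hdist (hev.mono fun n hn => (hH (φ n) i hn.1 j hn.2).1),
    le_of_tendsto hdist (hev.mono fun n hn => (hH (φ n) i hn.1 j hn.2).2)⟩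

theorem DenseRange.exists_noncontractingLipOn_extension [CompleteSpace V] {D : ℝ} {u : ι → X}
    (hu : DenseRange u) {g : ι → V} (hg : NoncontractingLipOn D u g Set.univ) :
    ∃ f : X → V, NoncontractingLipOn D id f Set.univ := by
  let ψ : Set.range u → V := fun x => g x.2.choose
  have hψ : ∀ x y : Set.range u, dist (x : X) y ≤ dist (ψ x) (ψ y) ∧
      dist (ψ x) (ψ y) ≤ D * dist (x : X) y := fun x y => by
    have := hg x.2.choose trivial y.2.choose trivial
    rwa [x.2.choose_spec, y.2.choose_spec] at this
  have hψlip : LipschitzWith D.toNNReal ψ := LipschitzWith.of_dist_le_mul fun x y =>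
    (hψ x y).2.trans (mul_le_mul_of_nonneg_right (Real.le_coe_toNNReal D) dist_nonneg)
  have hind : IsUniformInducing ((↑) : Set.range u → X) := isUniformInducing_val _
  have hdense : DenseRange ((↑) : Set.range u → X) := Dense.denseRange_val hu
  set f := (hind.isDenseInducing hdense).extend ψ
  have hf : Continuous f := (uniformContinuous_uniformly_extend hind hdense
    hψlip.uniformContinuous).continuous
  have hfψ : ∀ x : Set.range u, f x = ψ x :=
    uniformly_extend_of_ind hind hdense hψlip.uniformContinuous
  refine ⟨f, fun x _ y _ => hdense.induction_on₂ (p := fun x y =>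
    dist x y ≤ dist (f x) (f y) ∧ dist (f x) (f y) ≤ D * dist x y) ?_ ?_ x y⟩
  · have hfd : Continuous fun q : X × X => dist (f q.1) (f q.2) := by fun_prop
    exact (isClosed_le continuous_dist hfd).inter
      (isClosed_le hfd (continuous_const.mul continuous_dist))
  · intro x y
    simpa only [hfψ] using hψ x y

end Limit

/-- Compactness argument, part I: if every finite subset of a separable metric
space `X` admits a non-contracting embedding with Lipschitz constant at most `D`
into `V`, where `V` is either `ℝ^m` or the separable Hilbert space `ℓ²`, then so
does `X` itself. -/
theorem compactness_argument
    {X : Type*} [MetricSpace X] [TopologicalSpace.SeparableSpace X]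
    (V : Type*) [NormedAddCommGroup V] [InnerProductSpace ℝ V]
    (hV : (∃ m : ℕ, Nonempty (V ≃ₗᵢ[ℝ] EuclideanSpace ℝ (Fin m))) ∨
      Nonempty (V ≃ₗᵢ[ℝ] lp (fun _ : ℕ => ℝ) 2))
    (D : ℝ) (hD : 1 ≤ D)
    (h : ∀ Y : Finset X, ∃ f : X → V, ∀ x ∈ Y, ∀ y ∈ Y,
      dist x y ≤ dist (f x) (f y) ∧ dist (f x) (f y) ≤ D * dist x y) :
    ∃ f : X → V, ∀ x y : X,
      dist x y ≤ dist (f x) (f y) ∧ dist (f x) (f y) ≤ D * dist x y := by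
  classical
  obtain ⟨_, F, hF⟩ := completeSpace_and_exists_isCopyingFlag_of_euclidean_or_l2 hV
  rcases isEmpty_or_nonempty X with hX | hX
  · exact ⟨0, isEmptyElim⟩
  let u := TopologicalSpace.denseSeq X
  have hfinite : ∀ N, ∃ g : ℕ → V, NoncontractingLipOn D u g (Set.Iic N) := fun N => by
    obtain ⟨f, hf⟩ := h ((Finset.Iic N).image u)
    exact ⟨f ∘ u, fun i hi j hj => hf _ (Finset.mem_image_of_mem u (Finset.mem_Iic.2 hi))
      _ (Finset.mem_image_of_mem u (Finset.mem_Iic.2 hj))⟩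
  choose g hg using hfinite
  choose H hHK hH using fun N => hF.exists_normalized_copy (by linarith) (hg N)
  have hK i : IsCompact ((F i : Set V) ∩ Metric.closedBall 0 (D * dist (u i) (u 0))) :=
    have := hF.finiteDimensional i
    (F i).isCompact_inter_closedBall _
  obtain ⟨G, hG⟩ := exists_noncontractingLipOn_univ_of_Iic hK hHK hH
  obtain ⟨f, hf⟩ := (TopologicalSpace.denseRange_denseSeq X).exists_noncontractingLipOn_extension hG
  exact ⟨f, fun x y => hf x trivial y trivial⟩
end

section
/- Let (X,d) be a separable metric space with X = A ∪ B, and let V be either the Euclidean space ℝ^m or the separable infinite-dimensional Hilbert space ℓ². Let D ≥ 1, and let α : A × A → ℝ and β : B × B → ℝ be continuous functions. Assume that for every finite subset Y ⊆ X there exists a non-contracting embedding f : Y → V with ‖f‖_Lip ≤ D such that ‖f(x) − f(y)‖ ≤ α(x,y) for all x,y ∈ A ∩ Y and ‖f(x) − f(y)‖ ≤ β(x,y) for all x,y ∈ B ∩ Y. Then there exists a non-contracting embedding f : X → V with ‖f‖_Lip ≤ D such that ‖f(x) − f(y)‖ ≤ α(x,y) for all x,y ∈ A and ‖f(x) − f(y)‖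 ≤ β(x,y) for all x,y ∈ B. -/
/-!
Choose a countable set `S` whose traces are dense in `A` and in `B`, and enumerate it as
`s 0, s 1, …`. Every finite configuration in `V` can be moved congruently, keeping norms, so that
its `i`-th point lies in a fixed finite-dimensional subspace `P i`: all of `V` if `V ≅ ℝ^m`, and the
span of the first `i + 1` vectors of a Hilbert basis (by Gram–Schmidt) if `V ≅ ℓ²`. Applying this
to the finite embeddings of `s 0, …, s n`, translated so that `s 0 ↦ 0`, the bound
`‖f (s i) - f (s 0)‖ ≤ D * dist (s i) (s 0)` keeps the `i`-th point in a compact ball of `P i`,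
independently of `n`. A coordinatewise ultrafilter limit therefore exists and satisfies all the
(closed) distance constraints on `S`. It is `D`-Lipschitz on the dense set `S`, so it extends
continuously to `X`, and the constraints pass to the closure since `dist`, `α` and `β` are
continuous.
-/

open Set Filter Topology Submodule InnerProductSpace

def HasCongruentCopiesIn {V : Type*} [NormedAddCommGroup V] [NormedSpace ℝ V]
    (P : ℕ → Submodule ℝ V) : Prop :=
  ∀ (u : ℕ → V) (n : ℕ), ∃ g : ℕ → V, ∀ i ≤ n,
    ‖g i‖ = ‖u i‖ ∧ g i ∈ P i ∧ ∀ j ≤ n, dist (g i) (g j) = dist (u i) (u j)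

section GramSchmidt

variable {𝕜 E : Type*} [RCLike 𝕜] [NormedAddCommGroup E] [InnerProductSpace 𝕜 E]

theorem sum_inner_smul_eq_of_mem_span {ι : Type*} {v : ι → E}
    (hv : Pairwise fun a b => ⟪v a, v b⟫_𝕜 = 0) (hv₁ : ∀ k, v k ≠ 0 → ‖v k‖ = 1)
    {s : Finset ι} {x : E} (hx : x ∈ span 𝕜 (v '' s)) :
    ∑ k ∈ s, ⟪v k, x⟫_𝕜 • v k = x := by
  induction hx using Submodule.span_induction with
  | mem y hy =>
    obtain ⟨j, hj, rfl⟩ := hy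
    rw [Finset.sum_eq_single_of_mem j hj fun k _ hkj => by rw [hv hkj, zero_smul]]
    by_cases h0 : v j = 0
    · simp [h0]
    · rw [inner_self_eq_norm_sq_to_K, hv₁ j h0, RCLike.ofReal_one, one_pow, one_smul]
  | zero => simp
  | add y z _ _ hy hz => simp only [inner_add_right, add_smul, Finset.sum_add_distrib, hy, hz]
  | smul c y _ hy => simp only [inner_smul_right, mul_smul, ← Finset.smul_sum, hy]

variable {ι : Type*} [LinearOrder ι] [LocallyFiniteOrderBot ι] [WellFoundedLT ι]

theorem inner_gramSchmidtNormed_eq_zero_of_lt_s9 (u : ι → E) {i k : ι} (hik : i < k) :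
    ⟪gramSchmidtNormed 𝕜 u k, u i⟫_𝕜 = 0 := by
  simp only [gramSchmidtNormed, inner_smul_left, gramSchmidt_inv_triangular 𝕜 u hik, mul_zero]

theorem gramSchmidtNormed_pairwise_orthogonal (u : ι → E) :
    Pairwise fun a b => ⟪gramSchmidtNormed 𝕜 u a, gramSchmidtNormed 𝕜 u b⟫_𝕜 = 0 :=
  fun a b hab => by
    simp only [gramSchmidtNormed, inner_smul_left, inner_smul_right,
      gramSchmidt_orthogonal 𝕜 u hab, mul_zero]

end GramSchmidt

section CongruentCopies

variable {V : Type*} [NormedAddCommGroup V] [InnerProductSpace ℝ V]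

theorem Orthonormal.hasCongruentCopiesIn {b : ℕ → V} (hb : Orthonormal ℝ b) :
    HasCongruentCopiesIn fun i => span ℝ (b '' Iic i) := by
  intro u n
  set e := gramSchmidtNormed ℝ u
  -- `T` sends the Gram–Schmidt basis of `u 0, …, u n` to `b`, so it maps `u i` into the span of
  -- `b 0, …, b i` and is isometric on the span of the `u i`
  let T : V →ₗ[ℝ] V := ∑ k ∈ Finset.Iic n, (innerₛₗ ℝ (e k)).smulRight (b k)
  have hT : ∀ x, T x = ∑ k ∈ Finset.Iic n, ⟪e k, x⟫_ℝ • b k := by simp [T]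
  have hu : ∀ i ≤ n, u i ∈ span ℝ (e '' (Finset.Iic n : Set ℕ)) := fun i hi => by
    rw [Finset.coe_Iic, span_gramSchmidtNormed]
    exact mem_span_gramSchmidt ℝ u hi
  have hT_norm : ∀ x ∈ span ℝ (e '' (Finset.Iic n : Set ℕ)), ‖T x‖ = ‖x‖ := by
    intro x hx
    have hx_eq := sum_inner_smul_eq_of_mem_span (gramSchmidtNormed_pairwise_orthogonal u)
      (fun k => gramSchmidtNormed_unit_length') hx
    rw [← sq_eq_sq₀ (norm_nonneg _) (norm_nonneg _), ← real_inner_self_eq_norm_sq,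
      ← real_inner_self_eq_norm_sq, hT, hb.inner_sum]
    calc ∑ k ∈ Finset.Iic n, (starRingEnd ℝ) ⟪e k, x⟫_ℝ * ⟪e k, x⟫_ℝ
        = ⟪∑ k ∈ Finset.Iic n, ⟪e k, x⟫_ℝ • e k, x⟫_ℝ := by simp [sum_inner, real_inner_smul_left]
      _ = ⟪x, x⟫_ℝ := by rw [hx_eq]
  refine ⟨fun i => T (u i), fun i hi => ⟨hT_norm _ (hu i hi), ?_, fun j hj => ?_⟩⟩
  · show T (u i) ∈ _
    rw [hT]
    refine sum_mem fun k _ => ?_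
    by_cases hki : k ≤ i
    · exact smul_mem _ _ (subset_span ⟨k, hki, rfl⟩)
    · rw [inner_gramSchmidtNormed_eq_zero_of_lt_s9 u (not_le.1 hki), zero_smul]
      exact zero_mem _
  · rw [dist_eq_norm, dist_eq_norm, ← map_sub, hT_norm _ (sub_mem (hu i hi) (hu j hj))]

theorem exists_hasCongruentCopiesIn
    (hV : (∃ m : ℕ, Nonempty (V ≃ₗᵢ[ℝ] EuclideanSpace ℝ (Fin m))) ∨
      Nonempty (V ≃ₗᵢ[ℝ] lp (fun _ : ℕ => ℝ) 2)) :
    ∃ P : ℕ → Submodule ℝ V, (∀ i, FiniteDimensional ℝ (P i)) ∧ HasCongruentCopiesIn P := by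
  rcases hV with ⟨m, ⟨e⟩⟩ | ⟨⟨e⟩⟩
  · have := e.symm.toLinearEquiv.finiteDimensional
    exact ⟨fun _ => ⊤, fun _ => inferInstance,
      fun u _ => ⟨u, fun _ _ => ⟨rfl, mem_top, fun _ _ => rfl⟩⟩⟩
  · exact ⟨_, fun i => FiniteDimensional.span_of_finite ℝ ((finite_Iic i).image _),
      (HilbertBasis.ofRepr e).orthonormal.hasCongruentCopiesIn⟩

end CongruentCopies

theorem Ultrafilter.exists_tendsto_of_eventually_mem_isCompact {ι κ Y : Type*}
    [TopologicalSpace Y] {K : ι → Set Y} (hK : ∀ i, IsCompact (K i)) (𝒰 : Ultrafilter κ)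
    {G : κ → ι → Y} (hG : ∀ i, ∀ᶠ n in 𝒰, G n i ∈ K i) : ∃ ℓ : ι → Y, Tendsto G 𝒰 (𝓝 ℓ) := by
  have h i : ∃ y ∈ K i, ↑(𝒰.map (G · i)) ≤ 𝓝 y := (hK i).ultrafilter_le_nhds' _ (hG i)
  choose ℓ _ hℓ using h
  exact ⟨ℓ, tendsto_pi_nhds.2 hℓ⟩

section Compactness

variable {V : Type*} [NormedAddCommGroup V] [NormedSpace ℝ V] {P : ℕ → Submodule ℝ V}
  [∀ i, FiniteDimensional ℝ (P i)]

theorem HasCongruentCopiesIn.exists_seq_dist_mem (hP : HasCongruentCopiesIn P)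
    {Φ : ℕ → ℕ → Set ℝ} (hΦ : ∀ i j, IsClosed (Φ i j)) (hΦ_bdd : ∀ i j, BddAbove (Φ i j))
    (h : ∀ n, ∃ v : ℕ → V, ∀ i ≤ n, ∀ j ≤ n, dist (v i) (v j) ∈ Φ i j) :
    ∃ ℓ : ℕ → V, ∀ i j, dist (ℓ i) (ℓ j) ∈ Φ i j := by
  choose v hv using h
  -- translating `v n 0` to the origin keeps each `g n i` in a ball of radius independent of `n`
  choose g hg using fun n => hP (fun i => v n i - v n 0) n
  choose R hR using fun i => hΦ_bdd i 0
  have hdist {n i j} (hi : i ≤ n) (hj : j ≤ n) : dist (g n i) (g n j) ∈ Φ i j := by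
    rw [(hg n i hi).2.2 j hj, dist_sub_right]
    exact hv n i hi j hj
  have hK i : IsCompact (((↑) : P i → V) '' Metric.closedBall 0 (R i)) :=
    (isCompact_closedBall _ _).image continuous_subtype_val
  set 𝒰 : Ultrafilter ℕ := .of atTop
  have hlarge i : ∀ᶠ n in (𝒰 : Filter ℕ), i ≤ n :=
    (eventually_ge_atTop i).filter_mono (Ultrafilter.of_le _)
  obtain ⟨ℓ, hℓ⟩ := 𝒰.exists_tendsto_of_eventually_mem_isCompact hK
    (G := g) fun i => (hlarge i).mono fun n hi =>
      ⟨⟨g n i, (hg n i hi).2.1⟩, by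
        simpa [(hg n i hi).1, ← dist_eq_norm] using hR i (hv n i hi 0 n.zero_le), rfl⟩
  refine ⟨ℓ, fun i j => ?_⟩
  have hC : IsClosed {F : ℕ → V | dist (F i) (F j) ∈ Φ i j} :=
    (hΦ i j).preimage (by fun_prop)
  exact hC.mem_of_tendsto hℓ (((hlarge i).and (hlarge j)).mono fun n hn => hdist hn.1 hn.2)

theorem HasCongruentCopiesIn.exists_dist_mem_on_countable {X : Type*}
    (hP : HasCongruentCopiesIn P) {Φ : X → X → Set ℝ} (hΦ : ∀ x y, IsClosed (Φ x y))
    (hΦ_bdd : ∀ x y, BddAbove (Φ x y)) {S : Set X} (hS : S.Countable)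
    (h : ∀ Y : Finset X, ∃ f : X → V, ∀ x ∈ Y, ∀ y ∈ Y, dist (f x) (f y) ∈ Φ x y) :
    ∃ f : X → V, ∀ x ∈ S, ∀ y ∈ S, dist (f x) (f y) ∈ Φ x y := by
  classical
  rcases S.eq_empty_or_nonempty with rfl | hne
  · exact ⟨0, by simp⟩
  obtain ⟨s, rfl⟩ := hS.exists_eq_range hne
  obtain ⟨ℓ, hℓ⟩ := hP.exists_seq_dist_mem (fun i j => hΦ (s i) (s j))
    (fun i j => hΦ_bdd (s i) (s j)) fun n => by
      obtain ⟨f, hf⟩ := h ((Finset.range (n + 1)).image s)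
      exact ⟨f ∘ s, fun i hi j hj => hf _ (Finset.mem_image_of_mem s (by simpa [Nat.lt_succ_iff]))
        _ (Finset.mem_image_of_mem s (by simpa [Nat.lt_succ_iff]))⟩
  refine ⟨fun x => ℓ (Function.invFun s x), ?_⟩
  rintro _ ⟨i, rfl⟩ _ ⟨j, rfl⟩
  simpa only [Function.invFun_eq ⟨i, rfl⟩, Function.invFun_eq ⟨j, rfl⟩] using
    hℓ (Function.invFun s (s i)) (Function.invFun s (s j))

end Compactness

theorem UniformContinuousOn.exists_continuous_eqOn {α β : Type*} [UniformSpace α] [UniformSpace β]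
    [CompleteSpace β] [T0Space β] {f : α → β} {s : Set α} (hf : UniformContinuousOn f s)
    (hs : Dense s) : ∃ F : α → β, Continuous F ∧ EqOn F f s := by
  rw [uniformContinuousOn_iff_restrict] at hf
  exact ⟨hs.extend (s.domRestrict f), (hs.uniformContinuous_extend hf).continuous,
    fun x hx => hs.extend_of_ind hf ⟨x, hx⟩⟩

theorem Dense.le_of_forall_mem₂ {Y R : Type*} [TopologicalSpace Y] [TopologicalSpace R]
    [Preorder R] [OrderClosedTopology R] {S : Set Y} (hS : Dense S) {f g : Y → Y → R}
    (hf : Continuous (Function.uncurry f)) (hg : Continuous (Function.uncurry g))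
    (h : ∀ x ∈ S, ∀ y ∈ S, f x y ≤ g x y) (x y : Y) : f x y ≤ g x y :=
  le_on_closure (f := Function.uncurry f) (g := Function.uncurry g)
    (fun p (hp : p ∈ S ×ˢ S) => h _ hp.1 _ hp.2) hf.continuousOn hg.continuousOn
    (x := (x, y)) (by rw [(hS.prod hS).closure_eq]; trivial)

theorem exists_countable_dense_in_subtypes {X : Type*} [PseudoMetricSpace X]
    [TopologicalSpace.SeparableSpace X] (A B : Set X) :
    ∃ S : Set X, S.Countable ∧ Dense ((↑) ⁻¹' S : Set A) ∧ Dense ((↑) ⁻¹' S : Set B) := by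
  obtain ⟨SA, hSA, hSA_dense⟩ := TopologicalSpace.exists_countable_dense A
  obtain ⟨SB, hSB, hSB_dense⟩ := TopologicalSpace.exists_countable_dense B
  exact ⟨(↑) '' SA ∪ (↑) '' SB, (hSA.image _).union (hSB.image _),
    hSA_dense.mono fun a ha => .inl (mem_image_of_mem _ ha),
    hSB_dense.mono fun b hb => .inr (mem_image_of_mem _ hb)⟩

theorem subset_closure_of_dense_preimage_val {X : Type*} [TopologicalSpace X] {A S : Set X}
    (h : Dense ((↑) ⁻¹' S : Set A)) : A ⊆ closure S :=
  (Subtype.dense_iff.1 h).trans (closure_mono (image_preimage_subset _ _))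

section Constraints

variable {X : Type*} [MetricSpace X] {A B : Set X}

def admissibleDists (D : ℝ) (α : A × A → ℝ) (β : B × B → ℝ) (x y : X) : Set ℝ :=
  {r | dist x y ≤ r ∧ r ≤ D * dist x y ∧
    (∀ (hx : x ∈ A) (hy : y ∈ A), r ≤ α (⟨x, hx⟩, ⟨y, hy⟩)) ∧
    ∀ (hx : x ∈ B) (hy : y ∈ B), r ≤ β (⟨x, hx⟩, ⟨y, hy⟩)}

theorem isClosed_admissibleDists (D : ℝ) (α : A × A → ℝ) (β : B × B → ℝ) (x y : X) :
    IsClosed (admissibleDists D α β x y) := by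
  simp only [admissibleDists, ofPred_and, ofPred_forall]
  exact isClosed_Ici.inter <| isClosed_Iic.inter <|
    (isClosed_iInter fun _ => isClosed_iInter fun _ => isClosed_Iic).inter
      (isClosed_iInter fun _ => isClosed_iInter fun _ => isClosed_Iic)

theorem bddAbove_admissibleDists (D : ℝ) (α : A × A → ℝ) (β : B × B → ℝ) (x y : X) :
    BddAbove (admissibleDists D α β x y) :=
  ⟨D * dist x y, fun _ hr => hr.2.1⟩

end Constraints

theorem compactness_argument_with_bounds_general
    {X : Type*} [MetricSpace X] [TopologicalSpace.SeparableSpace X]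
    (A B : Set X) (hAB : A ∪ B = Set.univ)
    (V : Type*) [NormedAddCommGroup V] [InnerProductSpace ℝ V]
    (hV : (∃ m : ℕ, Nonempty (V ≃ₗᵢ[ℝ] EuclideanSpace ℝ (Fin m))) ∨
      Nonempty (V ≃ₗᵢ[ℝ] lp (fun _ : ℕ => ℝ) 2))
    (D : ℝ)
    (α : A × A → ℝ) (hα : Continuous α)
    (β : B × B → ℝ) (hβ : Continuous β)
    (h : ∀ Y : Finset X, ∃ f : X → V,
      (∀ x ∈ Y, ∀ y ∈ Y,
        dist x y ≤ dist (f x) (f y) ∧ dist (f x) (f y) ≤ D * dist x y) ∧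
      (∀ x : X, ∀ y : X, ∀ hx : x ∈ A, ∀ hy : y ∈ A, x ∈ Y → y ∈ Y →
        dist (f x) (f y) ≤ α (⟨x, hx⟩, ⟨y, hy⟩)) ∧
      (∀ x : X, ∀ y : X, ∀ hx : x ∈ B, ∀ hy : y ∈ B, x ∈ Y → y ∈ Y →
        dist (f x) (f y) ≤ β (⟨x, hx⟩, ⟨y, hy⟩))) :
    ∃ f : X → V,
      (∀ x y : X,
        dist x y ≤ dist (f x) (f y) ∧ dist (f x) (f y) ≤ D * dist x y) ∧
      (∀ x : X, ∀ y : X, ∀ hx : x ∈ A, ∀ hy : y ∈ A,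
        dist (f x) (f y) ≤ α (⟨x, hx⟩, ⟨y, hy⟩)) ∧
      (∀ x : X, ∀ y : X, ∀ hx : x ∈ B, ∀ hy : y ∈ B,
        dist (f x) (f y) ≤ β (⟨x, hx⟩, ⟨y, hy⟩)) := by
  have : CompleteSpace V := by
    rcases hV with ⟨_, ⟨e⟩⟩ | ⟨⟨e⟩⟩ <;> exact e.toIsometryEquiv.completeSpace_iff.2 inferInstance
  obtain ⟨P, _, hP⟩ := exists_hasCongruentCopiesIn hV
  obtain ⟨S, hS_countable, hSA, hSB⟩ := exists_countable_dense_in_subtypes A B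
  have hS : Dense S := fun x => union_subset (subset_closure_of_dense_preimage_val hSA)
    (subset_closure_of_dense_preimage_val hSB) (hAB ▸ mem_univ x)
  obtain ⟨f, hf⟩ := hP.exists_dist_mem_on_countable (isClosed_admissibleDists D α β)
    (bddAbove_admissibleDists D α β) hS_countable fun Y => by
      obtain ⟨f, hf, hfA, hfB⟩ := h Y
      exact ⟨f, fun x hx y hy => ⟨(hf x hx y hy).1, (hf x hx y hy).2,
        fun hxA hyA => hfA x y hxA hyA hx hy, fun hxB hyB => hfB x y hxB hyB hx hy⟩⟩
  obtain ⟨F, hF, hFf⟩ := (LipschitzOnWith.of_dist_le' fun x hx y hy => (hf x hx y hy).2.1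
    ).uniformContinuousOn.exists_continuous_eqOn hS
  have hFS : ∀ x ∈ S, ∀ y ∈ S, dist (F x) (F y) ∈ admissibleDists D α β x y :=
    fun x hx y hy => by rw [hFf hx, hFf hy]; exact hf x hx y hy
  refine ⟨F, fun x y => ⟨?_, ?_⟩, fun x y hx hy => ?_, fun x y hx hy => ?_⟩
  · exact hS.le_of_forall_mem₂ (f := dist) (g := fun x y => dist (F x) (F y)) (by fun_prop)
      (by fun_prop) (fun x hx y hy => (hFS x hx y hy).1) x y
  · exact hS.le_of_forall_mem₂ (f := fun x y => dist (F x) (F y)) (g := fun x y => D * dist x y)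
      (by fun_prop) (by fun_prop) (fun x hx y hy => (hFS x hx y hy).2.1) x y
  · exact hSA.le_of_forall_mem₂ (f := fun a b : A => dist (F a) (F b)) (g := fun a b => α (a, b))
      (by fun_prop) hα (fun a ha b hb => (hFS a ha b hb).2.2.1 a.2 b.2) ⟨x, hx⟩ ⟨y, hy⟩
  · exact hSB.le_of_forall_mem₂ (f := fun a b : B => dist (F a) (F b)) (g := fun a b => β (a, b))
      (by fun_prop) hβ (fun a ha b hb => (hFS a ha b hb).2.2.2 a.2 b.2) ⟨x, hx⟩ ⟨y, hy⟩

/-- Compactness argument, part II: in addition to part I, if `X = A ∪ B` and the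
finite-subset embeddings also satisfy upper bounds `‖f(x)-f(y)‖ ≤ α(x,y)` on
`A ∩ Y` and `‖f(x)-f(y)‖ ≤ β(x,y)` on `B ∩ Y` for continuous functions `α`, `β`,
then there is a global non-contracting embedding with Lipschitz constant at most
`D` satisfying the same bounds on all of `A` and `B`. -/
theorem compactness_argument_with_bounds
    {X : Type*} [MetricSpace X] [TopologicalSpace.SeparableSpace X]
    (A B : Set X) (hAB : A ∪ B = Set.univ)
    (V : Type*) [NormedAddCommGroup V] [InnerProductSpace ℝ V]
    (hV : (∃ m : ℕ, Nonempty (V ≃ₗᵢ[ℝ] EuclideanSpace ℝ (Fin m))) ∨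
      Nonempty (V ≃ₗᵢ[ℝ] lp (fun _ : ℕ => ℝ) 2))
    (D : ℝ) (hD : 1 ≤ D)
    (α : A × A → ℝ) (hα : Continuous α)
    (β : B × B → ℝ) (hβ : Continuous β)
    (h : ∀ Y : Finset X, ∃ f : X → V,
      (∀ x ∈ Y, ∀ y ∈ Y,
        dist x y ≤ dist (f x) (f y) ∧ dist (f x) (f y) ≤ D * dist x y) ∧
      (∀ x : X, ∀ y : X, ∀ hx : x ∈ A, ∀ hy : y ∈ A, x ∈ Y → y ∈ Y →
        dist (f x) (f y) ≤ α (⟨x, hx⟩, ⟨y, hy⟩)) ∧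
      (∀ x : X, ∀ y : X, ∀ hx : x ∈ B, ∀ hy : y ∈ B, x ∈ Y → y ∈ Y →
        dist (f x) (f y) ≤ β (⟨x, hx⟩, ⟨y, hy⟩))) :
    ∃ f : X → V,
      (∀ x y : X,
        dist x y ≤ dist (f x) (f y) ∧ dist (f x) (f y) ≤ D * dist x y) ∧
      (∀ x : X, ∀ y : X, ∀ hx : x ∈ A, ∀ hy : y ∈ A,
        dist (f x) (f y) ≤ α (⟨x, hx⟩, ⟨y, hy⟩)) ∧
      (∀ x : X, ∀ y : X, ∀ hx : x ∈ B, ∀ hy : y ∈ B,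
        dist (f x) (f y) ≤ β (⟨x, hx⟩, ⟨y, hy⟩)) :=
  compactness_argument_with_bounds_general A B hAB V hV D α hα β hβ h
end

section
/- Let G = (V, E) be a finite graph with Laplacian 𝓛, let E₁ ⊆ E with E₁ nonempty, let G₁ = (V, E₁) have Laplacian 𝓛₁, and let δ ≥ 0. Suppose that (1/(1+δ))·𝓛₁ ⪯ (1/2)·𝓛 ⪯ (1+δ)·𝓛₁. Then for every map f from V to a Hilbert space, (1/(1+δ)²) · Avg_{(u,v)∈E} ‖f(u) − f(v)‖² ≤ Avg_{(u,v)∈E₁} ‖f(u) − f(v)‖² ≤ (1+δ)² · Avg_{(u,v)∈E} ‖f(u) − f(v)‖², where Avg_{(u,v)∈F} denotes the average over the edges of F, i.e., (1/|F|)·Σ_{(u,v)∈F}. -/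
/-!
Write `S_G(f) = ∑_{u ∼ v} ‖f u - f v‖²` over ordered edges. For real-valued `x`,
`S_G(x) = 2 ⟪x, 𝓛 x⟫`, so a Loewner inequality `b 𝓛₁ ⪯ a 𝓛` gives `b S_{G₁} ≤ a S_G`;
writing a Hilbert-space valued `f` in an orthonormal basis of the span of its values
extends this to all `f`. Evaluating it at an orthonormal family `e` compares the edge
counts, since `S_G(e) = 2 |E|`. So the two Loewner inequalities bound the ratio of the
numerators and the ratio of the denominators of the two averages at once.
-/

open Finset in
/-- The average squared distance of the endpoints of an edge, over all
(ordered) edges of a finite graph, for a map `f` of the vertices into a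
Hilbert space. -/
noncomputable def edgeAvgSq {V : Type*} [Fintype V] {H : Type*}
    [NormedAddCommGroup H] (G : SimpleGraph V) [DecidableRel G.Adj]
    (f : V → H) : ℝ :=
  (∑ p ∈ univ.filter (fun p : V × V => G.Adj p.1 p.2), ‖f p.1 - f p.2‖ ^ 2) /
    (univ.filter (fun p : V × V => G.Adj p.1 p.2)).card

open Finset Matrix

noncomputable def edgeSumSq {V : Type*} [Fintype V] {H : Type*} [NormedAddCommGroup H]
    (G : SimpleGraph V) [DecidableRel G.Adj] (f : V → H) : ℝ :=
  ∑ p ∈ univ.filter (fun p : V × V => G.Adj p.1 p.2), ‖f p.1 - f p.2‖ ^ 2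

section

variable {V : Type*} [Fintype V] (G G₁ : SimpleGraph V) [DecidableRel G.Adj] [DecidableRel G₁.Adj]
  {E : Type*} [NormedAddCommGroup E]

lemma edgeSumSq_nonneg (f : V → E) : 0 ≤ edgeSumSq G f :=
  sum_nonneg fun _ _ => sq_nonneg _

variable [InnerProductSpace ℝ E]

lemma edgeSumSq_comp_linearIsometry {F : Type*} [NormedAddCommGroup F] [InnerProductSpace ℝ F]
    (φ : E →ₗᵢ[ℝ] F) (f : V → E) :
    edgeSumSq G (φ ∘ f) = edgeSumSq G f := by
  simp only [edgeSumSq, Function.comp_apply, ← map_sub, LinearIsometry.norm_map]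

lemma edgeSumSq_euclideanSpace {ι : Type*} [Fintype ι] (f : V → EuclideanSpace ℝ ι) :
    edgeSumSq G f = ∑ k, edgeSumSq G (fun v => f v k) := by
  simp only [edgeSumSq, EuclideanSpace.norm_sq_eq, PiLp.sub_apply, Real.norm_eq_abs, sq_abs]
  exact sum_comm

lemma edgeSumSq_of_orthonormal {e : V → E} (he : Orthonormal ℝ e) :
    edgeSumSq G e = 2 * #(univ.filter fun p : V × V => G.Adj p.1 p.2) := by
  rw [edgeSumSq, sum_congr rfl (g := fun _ => 2), sum_const, nsmul_eq_mul, mul_comm]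
  rintro ⟨u, v⟩ huv
  have huv : u ≠ v := G.ne_of_adj (mem_filter.mp huv).2
  rw [norm_sub_sq_real, he.1 u, he.1 v, he.2 huv]
  norm_num

lemma edgeAvgSq_eq_of_orthonormal {e : V → E} (he : Orthonormal ℝ e) {F : Type*}
    [NormedAddCommGroup F] (f : V → F) :
    edgeAvgSq G f = 2 * edgeSumSq G f / edgeSumSq G e := by
  rw [edgeSumSq_of_orthonormal G he, mul_div_mul_left _ _ two_ne_zero]
  rfl

lemma edgeSumSq_pos_of_orthonormal {e : V → E} (he : Orthonormal ℝ e)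
    (hne : ∃ u v, G.Adj u v) : 0 < edgeSumSq G e := by
  obtain ⟨u, v, huv⟩ := hne
  rw [edgeSumSq_of_orthonormal G he]
  have : 0 < #(univ.filter fun p : V × V => G.Adj p.1 p.2) :=
    card_pos.mpr ⟨(u, v), by simpa using huv⟩
  positivity

variable [DecidableEq V]

lemma edgeSumSq_eq_two_mul_dotProduct_lapMatrix (x : V → ℝ) :
    edgeSumSq G x = 2 * (x ⬝ᵥ (G.lapMatrix ℝ *ᵥ x)) := by
  rw [← toLinearMap₂'_apply', SimpleGraph.lapMatrix_toLinearMap₂', mul_div_cancel₀ _ two_ne_zero,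
    edgeSumSq, sum_filter, Fintype.sum_prod_type]
  simp only [Real.norm_eq_abs, sq_abs]

variable {G G₁} {a b : ℝ} (h : (a • G.lapMatrix ℝ - b • G₁.lapMatrix ℝ).PosSemidef)
include h

lemma edgeSumSq_le_of_posSemidef_real (x : V → ℝ) :
    b * edgeSumSq G₁ x ≤ a * edgeSumSq G x := by
  have hx := h.dotProduct_mulVec_nonneg x
  simp only [star_trivial, sub_mulVec, dotProduct_sub, smul_mulVec, dotProduct_smul,
    smul_eq_mul] at hx
  rw [edgeSumSq_eq_two_mul_dotProduct_lapMatrix, edgeSumSq_eq_two_mul_dotProduct_lapMatrix]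
  linarith

lemma edgeSumSq_le_of_posSemidef (f : V → E) : b * edgeSumSq G₁ f ≤ a * edgeSumSq G f := by
  let W := Submodule.span ℝ (Set.range f)
  have : FiniteDimensional ℝ W := .span_of_finite ℝ (Set.finite_range f)
  let g : V → W := fun v => ⟨f v, Submodule.subset_span ⟨v, rfl⟩⟩
  let B := stdOrthonormalBasis ℝ W
  have hf : ∀ G' : SimpleGraph V, ∀ _ : DecidableRel G'.Adj,
      edgeSumSq G' f = ∑ k, edgeSumSq G' (fun v => B.repr (g v) k) := fun G' _ => by
    rw [← edgeSumSq_euclideanSpace]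
    exact (edgeSumSq_comp_linearIsometry G' W.subtypeₗᵢ g).symm.trans
      (edgeSumSq_comp_linearIsometry G' B.repr.toLinearIsometry g).symm
  rw [hf G, hf G₁, mul_sum, mul_sum]
  exact sum_le_sum fun k _ => edgeSumSq_le_of_posSemidef_real h _

lemma exists_adj_of_posSemidef (hb : 0 < b) (hne : ∃ u v, G₁.Adj u v) : ∃ u v, G.Adj u v := by
  by_contra hG
  have he := (EuclideanSpace.basisFun V ℝ).orthonormal
  have hzero : edgeSumSq G (EuclideanSpace.basisFun V ℝ) = 0 := by
    rw [edgeSumSq_of_orthonormal G he, filter_false_of_mem fun p _ hp => hG ⟨p.1, p.2, hp⟩]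
    simp
  have hcmp := edgeSumSq_le_of_posSemidef h (EuclideanSpace.basisFun V ℝ)
  rw [hzero, mul_zero] at hcmp
  linarith [mul_pos hb (edgeSumSq_pos_of_orthonormal G₁ he hne)]

lemma edgeAvgSq_le_of_posSemidef {a' b' : ℝ}
    (h' : (a' • G₁.lapMatrix ℝ - b' • G.lapMatrix ℝ).PosSemidef) (hb : 0 < b) (hb' : 0 < b')
    (hne : ∃ u v, G.Adj u v) (hne₁ : ∃ u v, G₁.Adj u v) (f : V → E) :
    edgeAvgSq G₁ f ≤ a * a' / (b * b') * edgeAvgSq G f := by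
  let e := EuclideanSpace.basisFun V ℝ
  have he : Orthonormal ℝ e := e.orthonormal
  rw [edgeAvgSq_eq_of_orthonormal G he, edgeAvgSq_eq_of_orthonormal G₁ he,
    div_mul_div_comm, div_le_div_iff₀ (edgeSumSq_pos_of_orthonormal G₁ he hne₁)
      (mul_pos (mul_pos hb hb') (edgeSumSq_pos_of_orthonormal G he hne))]
  have hf := edgeSumSq_le_of_posSemidef h f
  have he' := edgeSumSq_le_of_posSemidef h' e
  have hprod := mul_le_mul hf he' (mul_nonneg hb'.le (edgeSumSq_nonneg G e))
    ((mul_nonneg hb.le (edgeSumSq_nonneg G₁ f)).trans hf)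
  linarith

end

theorem laplacian_comparison_average_bound_general
    {V : Type*} [Fintype V] [DecidableEq V]
    (G G₁ : SimpleGraph V) [DecidableRel G.Adj] [DecidableRel G₁.Adj]
    (hne : ∃ u v, G₁.Adj u v) (δ : ℝ) (hδ : 0 ≤ δ)
    (h1 : ((1 / 2 : ℝ) • G.lapMatrix ℝ - (1 / (1 + δ)) • G₁.lapMatrix ℝ).PosSemidef)
    (h2 : ((1 + δ) • G₁.lapMatrix ℝ - (1 / 2 : ℝ) • G.lapMatrix ℝ).PosSemidef)
    {H : Type*} [NormedAddCommGroup H] [InnerProductSpace ℝ H]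
    (f : V → H) :
    1 / (1 + δ) ^ 2 * edgeAvgSq G f ≤ edgeAvgSq G₁ f ∧
      edgeAvgSq G₁ f ≤ (1 + δ) ^ 2 * edgeAvgSq G f := by
  have hδ' : 0 < 1 + δ := by linarith
  have hneG := exists_adj_of_posSemidef h1 (by positivity) hne
  have hupper : edgeAvgSq G₁ f ≤ (1 + δ) ^ 2 * edgeAvgSq G f := by
    convert edgeAvgSq_le_of_posSemidef h1 h2 (by positivity) one_half_pos hneG hne f using 2
    field_simp
  have hlower : edgeAvgSq G f ≤ (1 + δ) ^ 2 * edgeAvgSq G₁ f := by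
    convert edgeAvgSq_le_of_posSemidef h2 h1 one_half_pos (by positivity) hne hneG f using 2
    field_simp
  refine ⟨?_, hupper⟩
  rw [one_div_mul_eq_div, div_le_iff₀ (by positivity), mul_comm]
  exact hlower

/-- If the Laplacians of a finite graph `G = (V,E)` and a nonempty subgraph
`G₁ = (V,E₁)` (with `E₁ ⊆ E`) satisfy `(1/(1+δ))·𝓛₁ ⪯ (1/2)·𝓛 ⪯ (1+δ)·𝓛₁`,
then for every map `f` of `V` into a Hilbert space the average of
`‖f(u) - f(v)‖²` over `E₁` is within a factor `(1+δ)²` of the average over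
`E`. -/
theorem laplacian_comparison_average_bound
    {V : Type*} [Fintype V] [DecidableEq V]
    (G G₁ : SimpleGraph V) [DecidableRel G.Adj] [DecidableRel G₁.Adj]
    (hle : G₁ ≤ G) (hne : ∃ u v, G₁.Adj u v) (δ : ℝ) (hδ : 0 ≤ δ)
    (h1 : ((1 / 2 : ℝ) • G.lapMatrix ℝ - (1 / (1 + δ)) • G₁.lapMatrix ℝ).PosSemidef)
    (h2 : ((1 + δ) • G₁.lapMatrix ℝ - (1 / 2 : ℝ) • G.lapMatrix ℝ).PosSemidef)
    {H : Type*} [NormedAddCommGroup H] [InnerProductSpace ℝ H] [CompleteSpace H]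
    (f : V → H) :
    1 / (1 + δ) ^ 2 * edgeAvgSq G f ≤ edgeAvgSq G₁ f ∧
      edgeAvgSq G₁ f ≤ (1 + δ) ^ 2 * edgeAvgSq G f :=
  laplacian_comparison_average_bound_general G G₁ hne δ hδ h1 h2 f
end

section
/- Let A ⊆ ℝ^a and B ⊆ ℝ^b (with the Euclidean norms), let D ≥ 1, and let f : A → B be a surjective non-contracting map with ‖f(x) − f(y)‖ ≤ D·‖x − y‖ for all x,y ∈ A. Then there exist maps f₁ : ℝ^a → H and f₂ : ℝ^b → H into a Hilbert space H such that: (1) f₁ and f₂ each have distortion at most 9·D + 2; and (2) f₁(x) = f₂(f(x)) for every x ∈ A. -/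
/-!
By Kirszbraun's theorem, `f` extends to a `D`-Lipschitz map `φ : ℝ^a → ℝ^b`, and the inverse of
`f`, a `1`-Lipschitz map `f(A) → A`, extends to a `1`-Lipschitz map `ψ : ℝ^b → ℝ^a`. The maps
`x ↦ (x, φ x)` and `y ↦ (ψ y, y)` into `ℝ^a × ℝ^b` with the `ℓ²` norm agree along `f` on `A`, and
their distortions are at most `1 + D` and `2`.

Kirszbraun's theorem is proved in the classical way. For finitely many constraints
`‖z - p i‖ ≤ ‖x₀ - u i‖`, let `z` minimize the largest ratio `ρ` of the two sides. Then `z` is a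
barycentre of the `p i` attaining that ratio. A weighted variance is half the weighted mean of the
squared pairwise distances, and these distances are smaller for the `p i` than for the `u i`; so
the variance of those `p i` about `z`, which is `ρ²` times the weighted mean of `‖x₀ - u i‖²`, is at
most that mean, whence `ρ ≤ 1`. Compactness of closed balls handles infinitely many constraints,
and Zorn's lemma extends a map one point at a time.
-/

open Finset Filter WithLp

section Kirszbraun

variable {E F : Type*} [NormedAddCommGroup E] [InnerProductSpace ℝ E]
  [NormedAddCommGroup F] [InnerProductSpace ℝ F]

theorem sum_sum_mul_norm_sub_sq {ι : Type*} (t : Finset ι) {w : ι → ℝ} (hw : ∑ i ∈ t, w i = 1)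
    (v : ι → F) (x₀ : F) :
    ∑ i ∈ t, ∑ j ∈ t, w i * w j * ‖v i - v j‖ ^ 2 =
      2 * ∑ i ∈ t, w i * ‖v i - x₀‖ ^ 2 - 2 * ‖∑ i ∈ t, w i • v i - x₀‖ ^ 2 := by
  have hbar : ∑ i ∈ t, w i • v i - x₀ = ∑ i ∈ t, w i • (v i - x₀) := by
    simp only [smul_sub, sum_sub_distrib, ← sum_smul, hw, one_smul]
  have hsq : ‖∑ i ∈ t, w i • (v i - x₀)‖ ^ 2 =
      ∑ i ∈ t, ∑ j ∈ t, w i * w j * inner ℝ (v i - x₀) (v j - x₀) := by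
    rw [← real_inner_self_eq_norm_sq, sum_inner]
    simp only [inner_sum, real_inner_smul_left, real_inner_smul_right]
    exact sum_congr rfl fun i _ => sum_congr rfl fun j _ => by ring
  have hsplit : ∀ i j, ‖v i - v j‖ ^ 2 =
      ‖v i - x₀‖ ^ 2 - 2 * inner ℝ (v i - x₀) (v j - x₀) + ‖v j - x₀‖ ^ 2 := fun i j => by
    rw [← norm_sub_sq_real, sub_sub_sub_cancel_right]
  rw [hbar, hsq]
  simp only [hsplit, mul_add, mul_sub, sum_add_distrib, sum_sub_distrib]
  simp only [← sum_mul, ← mul_sum, hw]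
  have hsecond : ∑ i ∈ t, ∑ j ∈ t, w i * w j * ‖v j - x₀‖ ^ 2 = ∑ j ∈ t, w j * ‖v j - x₀‖ ^ 2 := by
    simp only [mul_assoc, ← mul_sum, ← sum_mul, hw, one_mul]
  rw [hsecond]
  simp only [mul_one, mul_left_comm _ (2 : ℝ), ← mul_sum]
  ring

theorem sum_mul_norm_sub_sum_smul_sq_le {ι : Type*} (t : Finset ι) {w : ι → ℝ}
    (hw₀ : ∀ i ∈ t, 0 ≤ w i) (hw₁ : ∑ i ∈ t, w i = 1) {u : ι → E} {p : ι → F}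
    (hup : ∀ i ∈ t, ∀ j ∈ t, ‖p i - p j‖ ≤ ‖u i - u j‖) (x₀ : E) :
    ∑ i ∈ t, w i * ‖p i - ∑ j ∈ t, w j • p j‖ ^ 2 ≤ ∑ i ∈ t, w i * ‖u i - x₀‖ ^ 2 := by
  have hp := sum_sum_mul_norm_sub_sq t hw₁ p (∑ j ∈ t, w j • p j)
  have hu := sum_sum_mul_norm_sub_sq t hw₁ u x₀
  have hle : ∑ i ∈ t, ∑ j ∈ t, w i * w j * ‖p i - p j‖ ^ 2 ≤
      ∑ i ∈ t, ∑ j ∈ t, w i * w j * ‖u i - u j‖ ^ 2 :=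
    sum_le_sum fun i hi => sum_le_sum fun j hj =>
      mul_le_mul_of_nonneg_left (pow_le_pow_left₀ (norm_nonneg _) (hup i hi j hj) 2)
        (mul_nonneg (hw₀ i hi) (hw₀ j hj))
  rw [sub_self, norm_zero] at hp
  nlinarith [sq_nonneg ‖∑ i ∈ t, w i • u i - x₀‖]

theorem exists_forall_norm_sub_lt_of_notMem {K : Set F} (hK : Convex ℝ K) (hKc : IsComplete K)
    {z : F} (hz : z ∉ K) : ∃ q, ∀ w ∈ K, ‖q - w‖ < ‖z - w‖ := by
  rcases K.eq_empty_or_nonempty with rfl | hne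
  · exact ⟨z, fun w hw => hw.elim⟩
  obtain ⟨q, hqK, hq⟩ := exists_norm_eq_iInf_of_complete_convex hne hKc hK z
  have hobtuse := (norm_eq_iInf_iff_real_inner_le_zero hK hqK).mp hq
  have hzq : 0 < ‖z - q‖ := norm_pos_iff.mpr (sub_ne_zero.mpr fun h => hz (h ▸ hqK))
  refine ⟨q, fun w hw => ?_⟩
  have hexpand : ‖z - w‖ ^ 2 = ‖z - q‖ ^ 2 - 2 * inner ℝ (z - q) (w - q) + ‖q - w‖ ^ 2 := by
    rw [← norm_sub_rev w q, ← norm_sub_sq_real, sub_sub_sub_cancel_right]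
  exact lt_of_pow_lt_pow_left₀ 2 (norm_nonneg _) (by nlinarith [hobtuse w hw])

theorem mem_convexHull_of_not_exists_forall_norm_sub_lt {ι : Type*} [Finite ι] {c : ι → F}
    {R : ι → ℝ} {z : F} (hz : ∀ i, ‖z - c i‖ ≤ R i) (hR : ¬ ∃ z', ∀ i, ‖z' - c i‖ < R i) :
    z ∈ convexHull ℝ (Set.range fun i : {i // ‖z - c i‖ = R i} => c i) := by
  by_contra hzK
  -- `q` is closer than `z` to every centre whose sphere contains `z`, so moving `z` slightly
  -- towards `q` puts it inside every open ball.
  obtain ⟨q, hq⟩ := exists_forall_norm_sub_lt_of_notMem (convex_convexHull ℝ _)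
    ((Set.finite_range _).isCompact_convexHull (𝕜 := ℝ)).isComplete hzK
  suffices ∀ i, ∀ᶠ τ in nhdsWithin (0 : ℝ) (Set.Ioi 0), ‖AffineMap.lineMap z q τ - c i‖ < R i from
    let ⟨τ, hτ⟩ := (Filter.eventually_all.2 this).exists; hR ⟨_, hτ⟩
  intro i
  rcases (hz i).eq_or_lt with hi | hi
  · have hqi : ‖q - c i‖ < ‖z - c i‖ := hq _ (subset_convexHull ℝ _ ⟨⟨i, hi⟩, rfl⟩)
    filter_upwards [Ioc_mem_nhdsGT zero_lt_one] with τ ⟨hτ₀, hτ₁⟩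
    have := (convexOn_dist (c i) convex_univ).2 (Set.mem_univ z) (Set.mem_univ q)
      (sub_nonneg.2 hτ₁) hτ₀.le (sub_add_cancel 1 τ)
    simp only [dist_eq_norm, smul_eq_mul] at this
    rw [AffineMap.lineMap_apply_module]
    nlinarith
  · have hcont : Continuous fun τ : ℝ => ‖AffineMap.lineMap z q τ - c i‖ := by fun_prop
    refine nhdsWithin_le_nhds (hcont.continuousAt.eventually_lt continuousAt_const ?_)
    simpa using hi

theorem exists_forall_norm_sub_le_of_finite {ι : Type*} [Finite ι] [FiniteDimensional ℝ F]
    {u : ι → E} {p : ι → F} (hup : ∀ i j, ‖p i - p j‖ ≤ ‖u i - u j‖) (x₀ : E) :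
    ∃ z : F, ∀ i, ‖z - p i‖ ≤ ‖x₀ - u i‖ := by
  by_cases hx : ∃ i₀, u i₀ = x₀
  · obtain ⟨i₀, rfl⟩ := hx
    exact ⟨p i₀, fun i => hup i₀ i⟩
  rcases isEmpty_or_nonempty ι with hι | hι
  · exact ⟨0, fun i => isEmptyElim i⟩
  obtain ⟨i₁⟩ := id hι
  push Not at hx
  have := Fintype.ofFinite ι
  have hr : ∀ i, 0 < ‖u i - x₀‖ := fun i => norm_pos_iff.2 (sub_ne_zero.2 (hx i))
  set g : F → ℝ := fun z => univ.sup' univ_nonempty fun i => ‖z - p i‖ / ‖u i - x₀‖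
  have hgi : ∀ z i, ‖z - p i‖ / ‖u i - x₀‖ ≤ g z := fun z i =>
    le_sup' (fun i => ‖z - p i‖ / ‖u i - x₀‖) (mem_univ i)
  have hg : Continuous g := Continuous.finset_sup'_apply _ fun i _ => by fun_prop
  obtain ⟨z, hz⟩ := hg.exists_forall_le <| tendsto_atTop_mono (fun z => hgi z i₁) <| by
    simpa only [dist_eq_norm] using
      (tendsto_dist_right_cocompact_atTop (p i₁)).atTop_div_const (hr i₁)
  set ρ := g z
  have hzR : ∀ i, ‖z - p i‖ ≤ ρ * ‖u i - x₀‖ := fun i => (div_le_iff₀ (hr i)).1 (hgi z i)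
  have hR : ¬ ∃ z', ∀ i, ‖z' - p i‖ < ρ * ‖u i - x₀‖ := fun ⟨z', hz'⟩ =>
    (hz z').not_gt ((sup'_lt_iff _).2 fun i _ => (div_lt_iff₀ (hr i)).2 (hz' i))
  obtain ⟨t, w, hw₀, hw₁, hzw⟩ := (convexHull_range_eq_exists_affineCombination _).le
    (mem_convexHull_of_not_exists_forall_norm_sub_lt hzR hR)
  rw [affineCombination_eq_linear_combination _ _ _ hw₁] at hzw
  have hvar := sum_mul_norm_sub_sum_smul_sq_le t hw₀ hw₁ (u := fun i => u i) (p := fun i => p i)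
    (fun i _ j _ => hup i j) x₀
  have hactive : ∑ i ∈ t, w i * ‖p i - z‖ ^ 2 = ρ ^ 2 * ∑ i ∈ t, w i * ‖u i - x₀‖ ^ 2 := by
    rw [mul_sum]
    refine sum_congr rfl fun i _ => ?_
    rw [norm_sub_rev, i.2]
    ring
  have hpos : 0 < ∑ i ∈ t, w i * ‖u i - x₀‖ ^ 2 := by
    obtain ⟨i, hi, hwi⟩ := exists_lt_of_sum_lt (hw₁ ▸ (sum_const_zero.trans_lt one_pos))
    exact sum_pos' (fun j hj => mul_nonneg (hw₀ j hj) (sq_nonneg _))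
      ⟨i, hi, mul_pos hwi (pow_pos (hr i) 2)⟩
  have hρ : ρ ≤ 1 := by
    rw [hzw, hactive] at hvar
    exact (sq_le_one_iff₀ ((div_nonneg (norm_nonneg _) (hr i₁).le).trans (hgi z i₁))).1
      (le_of_mul_le_mul_right (by simpa using hvar) hpos)
  exact ⟨z, fun i => norm_sub_rev x₀ (u i) ▸ (hzR i).trans (mul_le_of_le_one_left (hr i).le hρ)⟩

end Kirszbraun

section Graph

variable {E F : Type*} [SeminormedAddCommGroup E] [SeminormedAddCommGroup F]

def IsNonexpandingGraph (G : Set (E × F)) : Prop :=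
  ∀ p ∈ G, ∀ q ∈ G, ‖p.2 - q.2‖ ≤ ‖p.1 - q.1‖

namespace IsNonexpandingGraph

variable {G : Set (E × F)}

theorem insert (hG : IsNonexpandingGraph G) {x₀ : E} {z : F}
    (hz : ∀ p ∈ G, ‖z - p.2‖ ≤ ‖x₀ - p.1‖) : IsNonexpandingGraph (insert (x₀, z) G) := by
  rintro p (rfl | hp) q (rfl | hq)
  · simp
  · exact hz q hq
  · rw [norm_sub_rev, norm_sub_rev p.1]
    exact hz p hp
  · exact hG p hp q hq

theorem sUnion {c : Set (Set (E × F))} (hc : IsChain (· ⊆ ·) c)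
    (h : ∀ G ∈ c, IsNonexpandingGraph G) : IsNonexpandingGraph (⋃₀ c) := by
  rintro p ⟨G, hG, hp⟩ q ⟨G', hG', hq⟩
  rcases hc.total hG hG' with hGG' | hG'G
  · exact h G' hG' p (hGG' hp) q hq
  · exact h G hG p hp q (hG'G hq)

end IsNonexpandingGraph

end Graph

section Extension

variable {E F : Type*} [NormedAddCommGroup E] [NormedAddCommGroup F]

namespace IsNonexpandingGraph

variable {G : Set (E × F)}

theorem eq_of_mem (hG : IsNonexpandingGraph G) {x : E} {y y' : F} (h : (x, y) ∈ G)
    (h' : (x, y') ∈ G) : y = y' := by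
  simpa [sub_eq_zero] using hG _ h _ h'

variable [InnerProductSpace ℝ E] [InnerProductSpace ℝ F] [FiniteDimensional ℝ F]

theorem exists_forall_norm_sub_le (hG : IsNonexpandingGraph G) (x₀ : E) :
    ∃ z : F, ∀ p ∈ G, ‖z - p.2‖ ≤ ‖x₀ - p.1‖ := by
  classical
  rcases G.eq_empty_or_nonempty with rfl | ⟨p₀, hp₀⟩
  · exact ⟨0, fun p hp => hp.elim⟩
  let ball : G → Set F := fun p => Metric.closedBall p.1.2 ‖x₀ - p.1.1‖
  have hfin : ∀ v : Finset G, (ball ⟨p₀, hp₀⟩ ∩ ⋂ p ∈ v, ball p).Nonempty := by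
    intro v
    obtain ⟨z, hz⟩ := exists_forall_norm_sub_le_of_finite (ι := ↥(Insert.insert (⟨p₀, hp₀⟩ : G) v))
      (u := fun p => p.1.1.1) (p := fun p => p.1.1.2) (fun p q => hG _ p.1.2 _ q.1.2) x₀
    refine ⟨z, ?_, Set.mem_iInter₂.2 fun p hp => ?_⟩
    · simpa [ball, dist_eq_norm] using hz ⟨_, mem_insert_self _ _⟩
    · simpa [ball, dist_eq_norm] using hz ⟨p, mem_insert_of_mem hp⟩
  obtain ⟨z, -, hz⟩ := (isCompact_closedBall _ _).inter_iInter_nonempty ball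
    (fun _ => Metric.isClosed_closedBall) hfin
  exact ⟨z, fun p hp => by simpa [ball, dist_eq_norm] using Set.mem_iInter.1 hz ⟨p, hp⟩⟩

theorem exists_lipschitzWith_extension (hG : IsNonexpandingGraph G) :
    ∃ g : E → F, LipschitzWith 1 g ∧ ∀ ⦃x y⦄, (x, y) ∈ G → g x = y := by
  obtain ⟨M, hGM, hM⟩ := zorn_subset_nonempty {H | IsNonexpandingGraph H}
    (fun c hc hchain _ => ⟨⋃₀ c, sUnion hchain hc, fun _ => Set.subset_sUnion_of_mem⟩) G hG
  have htotal : ∀ x, ∃ y, (x, y) ∈ M := fun x =>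
    let ⟨z, hz⟩ := hM.prop.exists_forall_norm_sub_le x
    ⟨z, hM.mem_of_prop_insert (hM.prop.insert hz)⟩
  choose g hg using htotal
  refine ⟨g, LipschitzWith.of_dist_le_mul fun x y => ?_, fun x y hxy =>
    hM.prop.eq_of_mem (hg x) (hGM hxy)⟩
  simpa [dist_eq_norm] using hM.prop _ (hg x) _ (hg y)

end IsNonexpandingGraph

variable [InnerProductSpace ℝ E] [InnerProductSpace ℝ F] [FiniteDimensional ℝ F]

open NNReal in
theorem LipschitzOnWith.extend_innerProductSpace {K : ℝ≥0} {s : Set E}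
    {φ : E → F} (hφ : LipschitzOnWith K φ s) : ∃ g : E → F, LipschitzWith K g ∧ Set.EqOn φ g s := by
  rcases eq_or_ne K 0 with rfl | hK
  · rcases s.eq_empty_or_nonempty with rfl | ⟨x₀, hx₀⟩
    · exact ⟨0, LipschitzWith.const' 0, Set.eqOn_empty _ _⟩
    refine ⟨fun _ => φ x₀, LipschitzWith.const' _, fun x hx => ?_⟩
    simpa using hφ.dist_le_mul x hx x₀ hx₀
  have hgraph : IsNonexpandingGraph ((fun x => (x, (K : ℝ)⁻¹ • φ x)) '' s) := by
    rintro _ ⟨x, hx, rfl⟩ _ ⟨y, hy, rfl⟩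
    have := hφ.dist_le_mul x hx y hy
    rw [dist_eq_norm, dist_eq_norm] at this
    rw [← smul_sub, norm_smul, norm_inv, NNReal.norm_eq, inv_mul_le_iff₀ (by positivity)]
    exact this
  obtain ⟨g, hg, hgφ⟩ := hgraph.exists_lipschitzWith_extension
  refine ⟨(K : ℝ) • g, ?_, fun x hx => ?_⟩
  · have := (lipschitzWith_smul (K : ℝ)).comp hg
    rwa [NNReal.nnnorm_eq, mul_one] at this
  · simp [hgφ ⟨x, hx, rfl⟩, smul_inv_smul₀ (NNReal.coe_ne_zero.2 hK)]

end Extension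

theorem WithLp.norm_toLp_sub_toLp_le {p : ENNReal} [Fact (1 ≤ p)] {α β : Type*}
    [SeminormedAddCommGroup α] [SeminormedAddCommGroup β] (x x' : α) (y y' : β) :
    ‖toLp p (x, y) - toLp p (x', y')‖ ≤ ‖x - x'‖ + ‖y - y'‖ :=
  calc ‖toLp p (x, y) - toLp p (x', y')‖ = ‖toLp p (x - x', 0) + toLp p (0, y - y')‖ := by
        rw [← toLp_sub, ← toLp_add, Prod.mk_sub_mk, Prod.mk_add_mk, add_zero, zero_add]
    _ ≤ ‖x - x'‖ + ‖y - y'‖ := (norm_add_le _ _).trans_eq (by rw [norm_toLp_fst, norm_toLp_snd])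

theorem external_bilipschitz_extension_general
    (a b : ℕ) (A : Set (EuclideanSpace ℝ (Fin a)))
    (D : ℝ) (hD : 1 ≤ D)
    (f : EuclideanSpace ℝ (Fin a) → EuclideanSpace ℝ (Fin b))
    (hfnc : ∀ x ∈ A, ∀ y ∈ A, ‖x - y‖ ≤ ‖f x - f y‖)
    (hflip : ∀ x ∈ A, ∀ y ∈ A, ‖f x - f y‖ ≤ D * ‖x - y‖) :
    ∃ (H : Type) (_ : NormedAddCommGroup H) (_ : InnerProductSpace ℝ H)
      (_ : CompleteSpace H)
      (f₁ : EuclideanSpace ℝ (Fin a) → H) (f₂ : EuclideanSpace ℝ (Fin b) → H),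
      (∃ c₁ : ℝ, 0 < c₁ ∧ ∀ x y : EuclideanSpace ℝ (Fin a),
        c₁ * ‖x - y‖ ≤ ‖f₁ x - f₁ y‖ ∧
        ‖f₁ x - f₁ y‖ ≤ c₁ * (9 * D + 2) * ‖x - y‖) ∧
      (∃ c₂ : ℝ, 0 < c₂ ∧ ∀ x y : EuclideanSpace ℝ (Fin b),
        c₂ * ‖x - y‖ ≤ ‖f₂ x - f₂ y‖ ∧
        ‖f₂ x - f₂ y‖ ≤ c₂ * (9 * D + 2) * ‖x - y‖) ∧
      (∀ x ∈ A, f₁ x = f₂ (f x)) := by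
  obtain ⟨φ, hφ, hφf⟩ := (LipschitzOnWith.of_dist_le' (f := f) (K := D) fun x hx y hy => by
    simpa only [dist_eq_norm] using hflip x hx y hy).extend_innerProductSpace
  have hinv : IsNonexpandingGraph ((fun x => (f x, x)) '' A) := by
    rintro _ ⟨x, hx, rfl⟩ _ ⟨y, hy, rfl⟩
    exact hfnc x hx y hy
  obtain ⟨ψ, hψ, hψf⟩ := hinv.exists_lipschitzWith_extension
  have hφD : ∀ x y, ‖φ x - φ y‖ ≤ D * ‖x - y‖ := fun x y => by
    simpa [dist_eq_norm, Real.coe_toNNReal _ (zero_le_one.trans hD)] using hφ.dist_le_mul x y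
  have hψ1 : ∀ x y, ‖ψ x - ψ y‖ ≤ ‖x - y‖ := fun x y => by
    simpa [dist_eq_norm] using hψ.dist_le_mul x y
  refine ⟨WithLp 2 (EuclideanSpace ℝ (Fin a) × EuclideanSpace ℝ (Fin b)), inferInstance,
    inferInstance, inferInstance, fun x => toLp 2 (x, φ x), fun y => toLp 2 (ψ y, y),
    ⟨1, one_pos, fun x y => ⟨?_, ?_⟩⟩, ⟨1, one_pos, fun x y => ⟨?_, ?_⟩⟩, fun x hx => ?_⟩
  all_goals dsimp only
  · simpa using WithLp.norm_fst_le (x := toLp 2 (x, φ x) - toLp 2 (y, φ y))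
  · nlinarith [WithLp.norm_toLp_sub_toLp_le (p := 2) x y (φ x) (φ y), hφD x y, norm_nonneg (x - y)]
  · simpa using WithLp.norm_snd_le (x := toLp 2 (ψ x, x) - toLp 2 (ψ y, y))
  · nlinarith [WithLp.norm_toLp_sub_toLp_le (p := 2) (ψ x) (ψ y) x y, hψ1 x y, norm_nonneg (x - y)]
  · rw [← hφf hx, hψf ⟨x, hx, rfl⟩]

/-- External bi-Lipschitz extension theorem (with explicit constant `9D + 2`):
a surjective non-contracting `D`-Lipschitz map `f : A → B` between subsets
`A ⊆ ℝ^a` and `B ⊆ ℝ^b` admits an external extension, i.e. maps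
`f₁ : ℝ^a → H` and `f₂ : ℝ^b → H` into a Hilbert space `H`, each of distortion
at most `9D + 2`, with `f₁ = f₂ ∘ f` on `A`. -/
theorem external_bilipschitz_extension
    (a b : ℕ) (A : Set (EuclideanSpace ℝ (Fin a)))
    (B : Set (EuclideanSpace ℝ (Fin b))) (D : ℝ) (hD : 1 ≤ D)
    (f : EuclideanSpace ℝ (Fin a) → EuclideanSpace ℝ (Fin b))
    (hfmem : ∀ x ∈ A, f x ∈ B)
    (hfsurj : ∀ y ∈ B, ∃ x ∈ A, f x = y)
    (hfnc : ∀ x ∈ A, ∀ y ∈ A, ‖x - y‖ ≤ ‖f x - f y‖)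
    (hflip : ∀ x ∈ A, ∀ y ∈ A, ‖f x - f y‖ ≤ D * ‖x - y‖) :
    ∃ (H : Type) (_ : NormedAddCommGroup H) (_ : InnerProductSpace ℝ H)
      (_ : CompleteSpace H)
      (f₁ : EuclideanSpace ℝ (Fin a) → H) (f₂ : EuclideanSpace ℝ (Fin b) → H),
      (∃ c₁ : ℝ, 0 < c₁ ∧ ∀ x y : EuclideanSpace ℝ (Fin a),
        c₁ * ‖x - y‖ ≤ ‖f₁ x - f₁ y‖ ∧
        ‖f₁ x - f₁ y‖ ≤ c₁ * (9 * D + 2) * ‖x - y‖) ∧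
      (∃ c₂ : ℝ, 0 < c₂ ∧ ∀ x y : EuclideanSpace ℝ (Fin b),
        c₂ * ‖x - y‖ ≤ ‖f₂ x - f₂ y‖ ∧
        ‖f₂ x - f₂ y‖ ≤ c₂ * (9 * D + 2) * ‖x - y‖) ∧
      (∀ x ∈ A, f₁ x = f₂ (f x)) :=
  external_bilipschitz_extension_general a b A D hD f hfnc hflip
end
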